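/- arXiv:2003.07357 — 4 statements merged into one kernel-verified Lean document; each statement's English description precedes it below -/
import Mathlib

section
/- Under the time-varying stochastic approximation setting described in the context, assume in addition that ‖θ̂_k − θ*_k‖ is integrable for every k, that there is ū with u_k ≤ ū < 1 for all k, and that there are constants 0 < x̲ ≤ X < ∞ with x̲ ≤ (M_k√(v_k) + B_k)/(1 − √(u_k)) ≤ X for all k. Then limsup_{k→∞} E‖θ̂_k − θ*_k‖ ≤ limsup_{k→∞} (M_k√(v_k) + B_k)/(1 − √(u_k)). -/
/-!
Baillon–Haddad cocoercivity `‖∇f x - ∇f y‖² ≤ L ⟪x - y, ∇f x - ∇f y⟫`, combined with strong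
monotonicity, makes the noiseless gradient step contract the distance to the minimiser by the
factor `√(1 - a C (2 - a L)) ≤ √u_k`, while the noise enters with gain `a ≤ √v_k`. Adding the
drift of the minimiser and taking expectations (`E‖X‖ ≤ √(E‖X‖²)`) gives
`d_{k+1} ≤ √u_k d_k + (1 - √u_k) r_k` for the mean distance `d_k` and the ratio `r_k` of the
statement. As `√u_k ≤ √ū < 1` and `r` is bounded above, the excess of `d_k` over any
`ρ > limsup r` decays geometrically.
-/

open MeasureTheory Filter Topology
open scoped RealInnerProductSpace

lemma add_add_half_le_of_hasDerivAt {φ φ' : ℝ → ℝ} {m : ℝ} (hφ : ∀ t, HasDerivAt φ (φ' t) t)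
    (hm : ∀ t ∈ Set.Ioo (0 : ℝ) 1, m * t ≤ φ' t - φ' 0) :
    φ 0 + φ' 0 + m / 2 ≤ φ 1 := by
  have hψ : ∀ t, HasDerivAt (fun t => φ t - t * φ' 0 - m / 2 * t ^ 2)
      (φ' t - φ' 0 - m * t) t := fun t =>
    (((hφ t).sub ((hasDerivAt_id' t).mul_const (φ' 0))).sub
      ((hasDerivAt_pow 2 t).const_mul (m / 2))).congr_deriv (by push_cast; ring)
  have hmono := monotoneOn_of_hasDerivWithinAt_nonneg (convex_Icc (0 : ℝ) 1)
    (fun t _ => (hψ t).continuousAt.continuousWithinAt) (fun t _ => (hψ t).hasDerivWithinAt)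
    (fun t ht => by rw [interior_Icc] at ht; linarith [hm t ht])
  have := hmono (Set.left_mem_Icc.2 zero_le_one) (Set.right_mem_Icc.2 zero_le_one) zero_le_one
  simp only at this
  linarith

section GradientInequalities

variable {E : Type*} [NormedAddCommGroup E] [InnerProductSpace ℝ E] [CompleteSpace E]
  {f : E → ℝ} {g : E → E}

lemma HasGradientAt.hasDerivAt_comp_add_smul {x δ g' : E} {t : ℝ}
    (hf : HasGradientAt f g' (x + t • δ)) :
    HasDerivAt (fun t : ℝ => f (x + t • δ)) ⟪g', δ⟫ t := by
  have hline : HasDerivAt (fun s : ℝ => x + s • δ) δ t := by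
    simpa using ((hasDerivAt_id t).smul_const δ).const_add x
  simpa [InnerProductSpace.toDual_apply_apply, Function.comp_def] using
    hf.hasFDerivAt.comp_hasDerivAt t hline

lemma add_inner_add_le_of_strongMonotone {C : ℝ} (hf : ∀ z, HasGradientAt f (g z) z)
    (hg : ∀ x y, C * ‖x - y‖ ^ 2 ≤ ⟪x - y, g x - g y⟫) (x y : E) :
    f x + ⟪g x, y - x⟫ + C / 2 * ‖y - x‖ ^ 2 ≤ f y := by
  set δ := y - x
  have h := add_add_half_le_of_hasDerivAt (m := C * ‖δ‖ ^ 2)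
    (fun t => (hf (x + t • δ)).hasDerivAt_comp_add_smul) fun t ht => by
      have h := hg (x + t • δ) x
      rw [add_sub_cancel_left, norm_smul, Real.norm_eq_abs, abs_of_pos ht.1,
        real_inner_smul_left] at h
      rw [zero_smul, add_zero, ← inner_sub_left, real_inner_comm]
      nlinarith [ht.1]
  simpa [δ, mul_div_right_comm] using h

lemma le_add_inner_add_of_lipschitz {L : ℝ} (hf : ∀ z, HasGradientAt f (g z) z)
    (hg : ∀ x y, ‖g x - g y‖ ≤ L * ‖x - y‖) (x y : E) :
    f y ≤ f x + ⟪g x, y - x⟫ + L / 2 * ‖y - x‖ ^ 2 := by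
  set δ := y - x
  have h := add_add_half_le_of_hasDerivAt (φ := fun t => -f (x + t • δ))
    (φ' := fun t => -⟪g (x + t • δ), δ⟫) (m := -(L * ‖δ‖ ^ 2))
    (fun t => (hf (x + t • δ)).hasDerivAt_comp_add_smul.neg) fun t ht => by
      have h := hg (x + t • δ) x
      rw [add_sub_cancel_left, norm_smul, Real.norm_eq_abs, abs_of_pos ht.1] at h
      have hcs := real_inner_le_norm (g (x + t • δ) - g x) δ
      have hrev : ⟪g x - g (x + t • δ), δ⟫ = -⟪g (x + t • δ) - g x, δ⟫ := by
        rw [← inner_neg_left, neg_sub]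
      rw [zero_smul, add_zero, neg_sub_neg, ← inner_sub_left, hrev]
      nlinarith [mul_le_mul_of_nonneg_right h (norm_nonneg δ)]
  simp [δ] at h
  linarith

lemma norm_sub_sq_le_mul_inner_of_lipschitz {L : ℝ} (hL : 0 < L) (hf : ∀ z, HasGradientAt f (g z) z)
    (hmono : ∀ x y, 0 ≤ ⟪x - y, g x - g y⟫) (hlip : ∀ x y, ‖g x - g y‖ ≤ L * ‖x - y‖)
    (x y : E) : ‖g x - g y‖ ^ 2 ≤ L * ⟪x - y, g x - g y⟫ := by
  -- `f - ⟪g x, ·⟫` is minimal at `x`; compare with its value after a gradient step of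
  -- length `1 / L` from `y`
  have key : ∀ x y, f x + ⟪g x, y - x⟫ + ‖g y - g x‖ ^ 2 / (2 * L) ≤ f y := fun x y => by
    set D := g y - g x
    have hconv := add_inner_add_le_of_strongMonotone hf (C := 0) (by simpa using hmono) x
      (y - L⁻¹ • D)
    have hdesc := le_add_inner_add_of_lipschitz hf hlip y (y - L⁻¹ • D)
    have hD : ⟪g y, D⟫ - ⟪g x, D⟫ = ‖D‖ ^ 2 := by
      rw [← inner_sub_left, real_inner_self_eq_norm_sq]
    rw [sub_sub_cancel_left, inner_neg_right, norm_neg, norm_smul, real_inner_smul_right,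
      Real.norm_eq_abs, abs_of_pos (inv_pos.2 hL)] at hdesc
    rw [sub_right_comm, inner_sub_right, real_inner_smul_right] at hconv
    field_simp at hdesc hconv ⊢
    nlinarith
  have hxy := key x y
  have hyx := key y x
  rw [norm_sub_rev] at hxy
  have hsum : ⟪g x, y - x⟫ + ⟪g y, x - y⟫ = -⟪x - y, g x - g y⟫ := by
    simp only [inner_sub_left, inner_sub_right, real_inner_comm]
    ring
  have h2 : 2 * (‖g x - g y‖ ^ 2 / (2 * L)) ≤ ⟪x - y, g x - g y⟫ := by linarith
  calc ‖g x - g y‖ ^ 2 = L * (2 * (‖g x - g y‖ ^ 2 / (2 * L))) := by field_simp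
    _ ≤ L * ⟪x - y, g x - g y⟫ := mul_le_mul_of_nonneg_left h2 hL.le

end GradientInequalities

/-- The paper's `u_k`. -/
noncomputable def contractionSq (a q C L : ℝ) : ℝ := L / C + a * C * ((q + 1) * (a * L - 1) - 1)

/-- The paper's `v_k`. -/
noncomputable def noiseGainSq (a q C L : ℝ) : ℝ := a * (a * L * (q + 1) - 1) / (q * C)

lemma le_contractionSq {a q C L : ℝ} (hC : 0 < C) (hCL : C ≤ L) (ha : 0 ≤ a) (hq : 0 ≤ q)
    (haL : 1 ≤ a * L) : 1 - a * C * (2 - a * L) ≤ contractionSq a q C L := by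
  have h : 1 ≤ L / C := (one_le_div hC).2 hCL
  unfold contractionSq
  nlinarith [mul_nonneg (mul_nonneg (mul_nonneg ha hC.le) hq) (sub_nonneg.2 haL)]

lemma sq_le_noiseGainSq {a q C L : ℝ} (hC : 0 < C) (hCL : C ≤ L) (ha : 0 ≤ a) (hq : 0 < q)
    (haL : 1 ≤ a * L) : a ^ 2 ≤ noiseGainSq a q C L := by
  rw [noiseGainSq, le_div_iff₀ (mul_pos hq hC)]
  nlinarith [mul_nonneg (mul_nonneg ha hq.le) (sub_nonneg.2 hCL), sub_nonneg.2 haL]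

section GradientStep

variable {E : Type*} [NormedAddCommGroup E] [InnerProductSpace ℝ E]

lemma le_of_strongMonotone_of_lipschitz [Nontrivial E] {g : E → E} {C L : ℝ}
    (hmono : ∀ x y, C * ‖x - y‖ ^ 2 ≤ ⟪x - y, g x - g y⟫)
    (hlip : ∀ x y, ‖g x - g y‖ ≤ L * ‖x - y‖) : C ≤ L := by
  obtain ⟨x, hx⟩ := exists_ne (0 : E)
  have hmonox := hmono x 0
  have hlipx := hlip x 0
  have hcs := real_inner_le_norm x (g x - g 0)
  rw [sub_zero] at hmonox hlipx
  have hx := norm_pos_iff.2 hx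
  have : C * ‖x‖ ^ 2 ≤ L * ‖x‖ ^ 2 := by nlinarith [mul_le_mul_of_nonneg_left hlipx hx.le]
  exact le_of_mul_le_mul_right this (by positivity)

lemma norm_sub_smul_sq_le {Δ G : E} {a C L : ℝ} (ha : 0 ≤ a) (haL : a * L ≤ 2)
    (hmono : C * ‖Δ‖ ^ 2 ≤ ⟪Δ, G⟫) (hcoco : ‖G‖ ^ 2 ≤ L * ⟪Δ, G⟫) :
    ‖Δ - a • G‖ ^ 2 ≤ (1 - a * C * (2 - a * L)) * ‖Δ‖ ^ 2 := by
  rw [norm_sub_sq_real, real_inner_smul_right, norm_smul, Real.norm_eq_abs, abs_of_nonneg ha]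
  nlinarith [mul_le_mul_of_nonneg_left hmono (mul_nonneg ha (sub_nonneg.2 haL)),
    mul_le_mul_of_nonneg_left hcoco (sq_nonneg a)]

lemma norm_gradientStep_sub_le [CompleteSpace E] [Nontrivial E] {f : E → ℝ} {g : E → E}
    {a q C L : ℝ} (hf : ∀ z, HasGradientAt f (g z) z)
    (hmono : ∀ x y, C * ‖x - y‖ ^ 2 ≤ ⟪x - y, g x - g y⟫)
    (hlip : ∀ x y, ‖g x - g y‖ ≤ L * ‖x - y‖) (hC : 0 < C) (ha : 0 < a) (hq : 0 < q)
    (haL : 1 ≤ a * L) (haLq : (q + 1) * (a * L - 1) ≤ 1) {θ θs : E} (hθs : g θs = 0) (e : E) :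
    ‖θ - a • (g θ + e) - θs‖ ≤
      √(contractionSq a q C L) * ‖θ - θs‖ + √(noiseGainSq a q C L) * ‖e‖ := by
  have hCL := le_of_strongMonotone_of_lipschitz hmono hlip
  have haL2 : a * L ≤ 2 := by nlinarith
  have hcoco := norm_sub_sq_le_mul_inner_of_lipschitz (hC.trans_le hCL) hf
    (fun x y => (mul_nonneg hC.le (sq_nonneg _)).trans (hmono x y)) hlip θ θs
  have hmono' : C * ‖θ - θs‖ ^ 2 ≤ ⟪θ - θs, g θ⟫ := by simpa [hθs] using hmono θ θs
  rw [hθs, sub_zero] at hcoco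
  have hstep : ‖θ - θs - a • g θ‖ ≤ √(contractionSq a q C L) * ‖θ - θs‖ := by
    rw [← Real.sqrt_sq (norm_nonneg (θ - θs)), ← Real.sqrt_mul' _ (sq_nonneg _)]
    exact Real.le_sqrt_of_sq_le ((norm_sub_smul_sq_le ha.le haL2 hmono' hcoco).trans
      (mul_le_mul_of_nonneg_right (le_contractionSq hC hCL ha.le hq.le haL) (sq_nonneg _)))
  have hgain : a ≤ √(noiseGainSq a q C L) :=
    Real.le_sqrt_of_sq_le (sq_le_noiseGainSq hC hCL ha.le hq haL)
  calc ‖θ - a • (g θ + e) - θs‖ = ‖(θ - θs - a • g θ) - a • e‖ := by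
        rw [smul_add]; congr 1; abel
    _ ≤ ‖θ - θs - a • g θ‖ + a * ‖e‖ := by
        rw [← norm_smul_of_nonneg ha.le]; exact norm_sub_le _ _
    _ ≤ _ := add_le_add hstep (mul_le_mul_of_nonneg_right hgain (norm_nonneg e))

end GradientStep

lemma integral_le_of_integral_sq_le {Ω : Type*} [MeasurableSpace Ω] {P : Measure Ω}
    [IsProbabilityMeasure P] {X : Ω → ℝ} {M : ℝ} (hX : MemLp X 2 P) (hM : 0 ≤ M)
    (hsq : ∫ ω, X ω ^ 2 ∂P ≤ M ^ 2) : ∫ ω, X ω ∂P ≤ M := by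
  have hvar := ProbabilityTheory.variance_eq_sub hX ▸ ProbabilityTheory.variance_nonneg X P
  exact le_of_sq_le_sq (by simp only [Pi.pow_apply] at hvar; linarith) hM

lemma integral_norm_gradientStep_sub_le {E Ω : Type*} [NormedAddCommGroup E]
    [InnerProductSpace ℝ E] [CompleteSpace E] [Nontrivial E] [MeasurableSpace Ω] {P : Measure Ω}
    [IsProbabilityMeasure P] {θ θ' θs θs' e : Ω → E} {f : Ω → E → ℝ} {g : Ω → E → E}
    {a q C L M B : ℝ} (hC : 0 < C) (ha : 0 < a) (hq : 0 < q) (haL : 1 ≤ a * L)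
    (haLq : (q + 1) * (a * L - 1) ≤ 1) (hM : 0 ≤ M) (hB : 0 ≤ B)
    (hreg : ∀ᵐ ω ∂P, (∀ x, HasGradientAt (f ω) (g ω x) x) ∧
      (∀ x y, C * ‖x - y‖ ^ 2 ≤ ⟪x - y, g ω x - g ω y⟫) ∧
      (∀ x y, ‖g ω x - g ω y‖ ≤ L * ‖x - y‖) ∧ g ω (θs ω) = 0)
    (hrec : ∀ᵐ ω ∂P, θ' ω = θ ω - a • (g ω (θ ω) + e ω))
    (he : MemLp e 2 P) (heM : ∫ ω, ‖e ω‖ ^ 2 ∂P ≤ M ^ 2)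
    (hd : MemLp (fun ω => θs' ω - θs ω) 2 P) (hdB : ∫ ω, ‖θs' ω - θs ω‖ ^ 2 ∂P ≤ B ^ 2)
    (hint : Integrable (fun ω => ‖θ ω - θs ω‖) P)
    (hint' : Integrable (fun ω => ‖θ' ω - θs' ω‖) P) :
    ∫ ω, ‖θ' ω - θs' ω‖ ∂P ≤ √(contractionSq a q C L) * ∫ ω, ‖θ ω - θs ω‖ ∂P +
      (M * √(noiseGainSq a q C L) + B) := by
  set s := √(contractionSq a q C L)
  set w := √(noiseGainSq a q C L)
  have hpt : ∀ᵐ ω ∂P, ‖θ' ω - θs' ω‖ ≤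
      s * ‖θ ω - θs ω‖ + w * ‖e ω‖ + ‖θs' ω - θs ω‖ := by
    filter_upwards [hreg, hrec] with ω ⟨hf, hmono, hlip, hθs⟩ hrecω
    calc ‖θ' ω - θs' ω‖ ≤ ‖θ' ω - θs ω‖ + ‖θs' ω - θs ω‖ := by
          rw [norm_sub_rev (θs' ω)]; exact norm_sub_le_norm_sub_add_norm_sub _ _ _
      _ ≤ _ := by
        rw [hrecω]
        gcongr
        exact norm_gradientStep_sub_le hf hmono hlip hC ha hq haL haLq hθs (e ω)
  have h₁ : Integrable (fun ω => s * ‖θ ω - θs ω‖) P := hint.const_mul s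
  have h₂ : Integrable (fun ω => w * ‖e ω‖) P := ((he.integrable one_le_two).norm).const_mul w
  have h₁₂ : Integrable (fun ω => s * ‖θ ω - θs ω‖ + w * ‖e ω‖) P := h₁.add h₂
  have h₃ : Integrable (fun ω => ‖θs' ω - θs ω‖) P := (hd.integrable one_le_two).norm
  have heM' := integral_le_of_integral_sq_le he.norm hM heM
  have hdB' := integral_le_of_integral_sq_le hd.norm hB hdB
  calc ∫ ω, ‖θ' ω - θs' ω‖ ∂P
      ≤ ∫ ω, (s * ‖θ ω - θs ω‖ + w * ‖e ω‖ + ‖θs' ω - θs ω‖) ∂P :=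
        integral_mono_ae hint' (h₁₂.add h₃) hpt
    _ = s * ∫ ω, ‖θ ω - θs ω‖ ∂P + w * ∫ ω, ‖e ω‖ ∂P + ∫ ω, ‖θs' ω - θs ω‖ ∂P := by
        rw [integral_add h₁₂ h₃, integral_add h₁ h₂, integral_const_mul, integral_const_mul]
    _ ≤ _ := by nlinarith [Real.sqrt_nonneg (noiseGainSq a q C L)]

lemma sub_le_pow_mul_of_le_convexComb {d r s : ℕ → ℝ} {s₀ ρ : ℝ} {K : ℕ}
    (hs0 : ∀ k, 0 ≤ s k) (hs : ∀ k, s k ≤ s₀) (hs1 : s₀ ≤ 1)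
    (hstep : ∀ k, d (k + 1) ≤ s k * d k + (1 - s k) * r k) (hr : ∀ k ≥ K, r k ≤ ρ) (n : ℕ) :
    d (K + n) - ρ ≤ s₀ ^ n * max (d K - ρ) 0 := by
  induction n with
  | zero => simp
  | succ n ih =>
    have hs0' : 0 ≤ s₀ := (hs0 0).trans (hs 0)
    have hc : 0 ≤ s₀ ^ n * max (d K - ρ) 0 := by positivity
    have hmix : (1 - s (K + n)) * r (K + n) ≤ (1 - s (K + n)) * ρ :=
      mul_le_mul_of_nonneg_left (hr _ (Nat.le_add_right K n)) (by linarith [hs (K + n)])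
    calc d (K + (n + 1)) - ρ ≤ s (K + n) * (d (K + n) - ρ) := by
          rw [← add_assoc]; linarith [hstep (K + n)]
      _ ≤ s₀ * (s₀ ^ n * max (d K - ρ) 0) := by
          nlinarith [hs0 (K + n), hs (K + n)]
      _ = s₀ ^ (n + 1) * max (d K - ρ) 0 := by ring

lemma limsup_le_limsup_of_le_convexComb {d r s : ℕ → ℝ} {s₀ X : ℝ}
    (hs0 : ∀ k, 0 ≤ s k) (hs : ∀ k, s k ≤ s₀) (hs1 : s₀ < 1) (hrX : ∀ k, r k ≤ X)
    (hd0 : ∀ k, 0 ≤ d k) (hstep : ∀ k, d (k + 1) ≤ s k * d k + (1 - s k) * r k) :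
    limsup d atTop ≤ limsup r atTop := by
  refine le_of_forall_gt_imp_ge_of_dense fun ρ hρ => ?_
  obtain ⟨K, hK⟩ := eventually_atTop.1
    (eventually_lt_of_limsup_lt hρ (isBoundedUnder_of ⟨X, hrX⟩))
  set w : ℕ → ℝ := fun k => ρ + s₀ ^ (k - K) * max (d K - ρ) 0
  have hw : Tendsto w atTop (𝓝 ρ) := by
    simpa using tendsto_const_nhds.add
      (((tendsto_pow_atTop_nhds_zero_of_lt_one ((hs0 0).trans (hs 0)) hs1).comp
        (tendsto_sub_atTop_nat K)).mul_const (max (d K - ρ) 0))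
  have hdw : ∀ k ≥ K, d k ≤ w k := fun k hk => by
    have := sub_le_pow_mul_of_le_convexComb hs0 hs hs1.le hstep (fun k hk => (hK k hk).le) (k - K)
    rw [Nat.add_sub_cancel' hk] at this
    simp only [w]; linarith
  calc limsup d atTop ≤ limsup w atTop :=
        limsup_le_limsup (eventually_atTop.2 ⟨K, hdw⟩)
          (isBoundedUnder_of ⟨0, hd0⟩).isCoboundedUnder_le hw.isBoundedUnder_le
    _ = ρ := hw.limsup_eq

theorem stmt_1_general {p : ℕ} (hp : 1 ≤ p)
    {Ω : Type} [MeasurableSpace Ω] (P : Measure Ω) [IsProbabilityMeasure P]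
    (θhat θstar e : ℕ → Ω → EuclideanSpace ℝ (Fin p))
    (f : ℕ → Ω → EuclideanSpace ℝ (Fin p) → ℝ)
    (g : ℕ → Ω → EuclideanSpace ℝ (Fin p) → EuclideanSpace ℝ (Fin p))
    (a q C L M B u v : ℕ → ℝ)
    (hCpos : ∀ k, 0 < C k) (hM : ∀ k, 0 ≤ M k) (hB : ∀ k, 0 ≤ B k)
    (hreg : ∀ k, ∀ᵐ ω ∂P,
      ContDiff ℝ 1 (f k ω) ∧
      (∀ x, HasGradientAt (f k ω) (g k ω x) x) ∧
      (∀ x y : EuclideanSpace ℝ (Fin p),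
        C k * ‖x - y‖ ^ 2 ≤ (inner ℝ (x - y) (g k ω x - g k ω y) : ℝ)) ∧
      (∀ x y : EuclideanSpace ℝ (Fin p), ‖g k ω x - g k ω y‖ ≤ L k * ‖x - y‖) ∧
      g k ω (θstar k ω) = 0)
    (hrec : ∀ k, ∀ᵐ ω ∂P,
      θhat (k + 1) ω = θhat k ω - a k • (g k ω (θhat k ω) + e k ω))
    (heL2 : ∀ k, MemLp (e k) 2 P)
    (heM : ∀ k, (∫ ω, ‖e k ω‖ ^ 2 ∂P) ≤ M k ^ 2)
    (hdL2 : ∀ k, MemLp (fun ω => θstar (k + 1) ω - θstar k ω) 2 P)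
    (hdB : ∀ k, (∫ ω, ‖θstar (k + 1) ω - θstar k ω‖ ^ 2 ∂P) ≤ B k ^ 2)
    (ha : ∀ k, 0 < a k) (hq : ∀ k, 0 < q k)
    (haL : ∀ k, 1 ≤ a k * L k)
    (haLq : ∀ k, (q k + 1) * (a k * L k - 1) ≤ 1)
    (hu : ∀ k, u k = L k / C k + a k * C k * ((q k + 1) * (a k * L k - 1) - 1))
    (hv : ∀ k, v k = a k * (a k * L k * (q k + 1) - 1) / (q k * C k))
    (hint : ∀ k, Integrable (fun ω => ‖θhat k ω - θstar k ω‖) P)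
    (ubar : ℝ) (hubar1 : ubar < 1) (hubar : ∀ k, u k ≤ ubar)
    (xlo X : ℝ)
    (hratio : ∀ k,
      xlo ≤ (M k * Real.sqrt (v k) + B k) / (1 - Real.sqrt (u k)) ∧
        (M k * Real.sqrt (v k) + B k) / (1 - Real.sqrt (u k)) ≤ X) :
    Filter.limsup (fun k => ∫ ω, ‖θhat k ω - θstar k ω‖ ∂P) Filter.atTop ≤
      Filter.limsup
        (fun k => (M k * Real.sqrt (v k) + B k) / (1 - Real.sqrt (u k)))
        Filter.atTop := by
  have : Nonempty (Fin p) := ⟨⟨0, hp⟩⟩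
  have hs : ∀ k, √(u k) ≤ √(max ubar 0) :=
    fun k => Real.sqrt_le_sqrt ((hubar k).trans (le_max_left _ _))
  have hs1 : √(max ubar 0) < 1 := (Real.sqrt_lt' one_pos).2 (by simpa using hubar1)
  refine limsup_le_limsup_of_le_convexComb (fun k => Real.sqrt_nonneg _) hs hs1
    (fun k => (hratio k).2) (fun k => integral_nonneg fun _ => norm_nonneg _) fun k => ?_
  rw [mul_div_cancel₀ _ (by linarith [hs k] : 1 - √(u k) ≠ 0), hu, hv]
  exact integral_norm_gradientStep_sub_le (hCpos k) (ha k) (hq k) (haL k) (haLq k) (hM k) (hB k)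
    ((hreg k).mono fun _ h => h.2) (hrec k) (heL2 k) (heM k) (hdL2 k) (hdB k) (hint k)
    (hint (k + 1))

/-- Asymptotic MAD bound: under the bounded-drift time-varying stochastic
approximation setting, if additionally `u_k ≤ ū < 1` for all `k` and
`0 < x̲ ≤ (M_k√(v_k)+B_k)/(1−√(u_k)) ≤ X < ∞` for all `k`, then
`limsup_k E‖θ̂_k − θ*_k‖ ≤ limsup_k (M_k√(v_k)+B_k)/(1−√(u_k))`. -/
theorem stmt_1 {p : ℕ} (hp : 1 ≤ p)
    {Ω : Type} [MeasurableSpace Ω] (P : Measure Ω) [IsProbabilityMeasure P]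
    (θhat θstar e : ℕ → Ω → EuclideanSpace ℝ (Fin p))
    (f : ℕ → Ω → EuclideanSpace ℝ (Fin p) → ℝ)
    (g : ℕ → Ω → EuclideanSpace ℝ (Fin p) → EuclideanSpace ℝ (Fin p))
    (a q C L M B u v : ℕ → ℝ)
    (hmeas1 : ∀ k, Measurable (θhat k))
    (hmeas2 : ∀ k, Measurable (θstar k))
    (hmeas3 : ∀ k, Measurable (e k))
    (hCpos : ∀ k, 0 < C k) (hM : ∀ k, 0 ≤ M k) (hB : ∀ k, 0 ≤ B k)
    (hreg : ∀ k, ∀ᵐ ω ∂P,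
      ContDiff ℝ 1 (f k ω) ∧
      (∀ x, HasGradientAt (f k ω) (g k ω x) x) ∧
      (∀ x y : EuclideanSpace ℝ (Fin p),
        C k * ‖x - y‖ ^ 2 ≤ (inner ℝ (x - y) (g k ω x - g k ω y) : ℝ)) ∧
      (∀ x y : EuclideanSpace ℝ (Fin p), ‖g k ω x - g k ω y‖ ≤ L k * ‖x - y‖) ∧
      g k ω (θstar k ω) = 0)
    (hrec : ∀ k, ∀ᵐ ω ∂P,
      θhat (k + 1) ω = θhat k ω - a k • (g k ω (θhat k ω) + e k ω))
    (heL2 : ∀ k, MemLp (e k) 2 P)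
    (heM : ∀ k, (∫ ω, ‖e k ω‖ ^ 2 ∂P) ≤ M k ^ 2)
    (hdL2 : ∀ k, MemLp (fun ω => θstar (k + 1) ω - θstar k ω) 2 P)
    (hdB : ∀ k, (∫ ω, ‖θstar (k + 1) ω - θstar k ω‖ ^ 2 ∂P) ≤ B k ^ 2)
    (ha : ∀ k, 0 < a k) (hq : ∀ k, 0 < q k)
    (haL : ∀ k, 1 ≤ a k * L k)
    (haLq : ∀ k, (q k + 1) * (a k * L k - 1) ≤ 1)
    (hu : ∀ k, u k = L k / C k + a k * C k * ((q k + 1) * (a k * L k - 1) - 1))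
    (hv : ∀ k, v k = a k * (a k * L k * (q k + 1) - 1) / (q k * C k))
    (hint : ∀ k, Integrable (fun ω => ‖θhat k ω - θstar k ω‖) P)
    (ubar : ℝ) (hubar1 : ubar < 1) (hubar : ∀ k, u k ≤ ubar)
    (xlo X : ℝ) (hxlo : 0 < xlo) (hxloX : xlo ≤ X)
    (hratio : ∀ k,
      xlo ≤ (M k * Real.sqrt (v k) + B k) / (1 - Real.sqrt (u k)) ∧
        (M k * Real.sqrt (v k) + B k) / (1 - Real.sqrt (u k)) ≤ X) :
    Filter.limsup (fun k => ∫ ω, ‖θhat k ω - θstar k ω‖ ∂P) Filter.atTop ≤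
      Filter.limsup
        (fun k => (M k * Real.sqrt (v k) + B k) / (1 - Real.sqrt (u k)))
        Filter.atTop :=
  stmt_1_general hp P θhat θstar e f g a q C L M B u v hCpos hM hB hreg hrec heL2 heM hdL2 hdB ha hq
    haL haLq hu hv hint ubar hubar1 hubar xlo X hratio
end

section
/- Under the time-varying stochastic approximation setting described in the context, and assuming in addition that ‖θ̂_k − θ*_k‖ is square-integrable for every k, the root-mean-squared error satisfies, for every k ∈ ℕ, √(E‖θ̂_{k+1} − θ*_{k+1}‖²) ≤ √(u_k · E‖θ̂_k − θ*_k‖²) + M_k·√(v_k) + B_k. -/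
/-!
With `b = x - x*` and `h = ∇f(x)`, strong monotonicity gives `C‖b‖² ≤ ⟪b, h⟫` and the
Baillon–Haddad cocoercivity of an `L`-smooth convex gradient gives `‖h‖² ≤ L⟪b, h⟫`; together
`‖b - a h‖² ≤ (1 - aC(2 - aL))‖b‖²`, and `1 - aC(2 - aL) ≤ u`, `a² ≤ v` since `C ≤ L`.
So pointwise `‖θ̂ₖ₊₁ - θ*ₖ₊₁‖ ≤ √uₖ‖θ̂ₖ - θ*ₖ‖ + √vₖ‖eₖ‖ + ‖θ*ₖ₊₁ - θ*ₖ‖`, and Minkowski's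
inequality in `L²(P)` turns this into the bound on root-mean-squared errors.
-/

open MeasureTheory Real

section Gradient

variable {E : Type*} [NormedAddCommGroup E] [InnerProductSpace ℝ E] {G : E → E}

theorem le_of_strongly_monotone_of_lipschitz [Nontrivial E] {C L : ℝ}
    (hstrong : ∀ x y, C * ‖x - y‖ ^ 2 ≤ inner ℝ (x - y) (G x - G y))
    (hlip : ∀ x y, ‖G x - G y‖ ≤ L * ‖x - y‖) : C ≤ L := by
  obtain ⟨x, hx⟩ := exists_ne (0 : E)
  have hx' : 0 < ‖x‖ ^ 2 := by positivity
  have := calc C * ‖x‖ ^ 2 ≤ inner ℝ x (G x - G 0) := by simpa using hstrong x 0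
    _ ≤ ‖x‖ * ‖G x - G 0‖ := real_inner_le_norm _ _
    _ ≤ ‖x‖ * (L * ‖x‖) := by gcongr; simpa using hlip x 0
  nlinarith

variable [CompleteSpace E] {F : E → ℝ}

theorem hasDerivAt_sub_inner_gradient (hgrad : ∀ x, HasGradientAt F (G x) x) (x d : E) (s : ℝ) :
    HasDerivAt (fun r : ℝ => F (x + r • d) - r * inner ℝ (G x) d)
      (inner ℝ (G (x + s • d) - G x) d) s := by
  have hline : HasDerivAt (fun r : ℝ => x + r • d) d s := by
    simpa using ((hasDerivAt_id s).smul_const d).const_add x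
  have hF := (hgrad (x + s • d)).hasFDerivAt.comp_hasDerivAt s hline
  rw [InnerProductSpace.toDual_apply_apply] at hF
  rw [inner_sub_left]
  exact hF.sub (hasDerivAt_mul_const _)

theorem add_inner_gradient_le_of_monotone (hgrad : ∀ x, HasGradientAt F (G x) x)
    (hmono : ∀ x y, 0 ≤ inner ℝ (x - y) (G x - G y)) (x y : E) :
    F x + inner ℝ (G x) (y - x) ≤ F y := by
  obtain ⟨c, ⟨hc0, -⟩, hc⟩ := exists_hasDerivAt_eq_slope _ _ zero_lt_one
    (fun s _ => (hasDerivAt_sub_inner_gradient hgrad x (y - x) s).continuousAt.continuousWithinAt)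
    (fun s _ => hasDerivAt_sub_inner_gradient hgrad x (y - x) s)
  have hpos : 0 ≤ c * inner ℝ (G (x + c • (y - x)) - G x) (y - x) := by
    simpa [inner_smul_left, real_inner_comm] using hmono (x + c • (y - x)) x
  have := (mul_nonneg_iff_of_pos_left hc0).mp hpos
  simp only [hc, zero_smul, add_zero, one_smul, add_sub_cancel, sub_zero, div_one] at this
  linarith

theorem le_add_inner_gradient_add_of_lipschitz {L : ℝ} (hgrad : ∀ x, HasGradientAt F (G x) x)
    (hlip : ∀ x y, ‖G x - G y‖ ≤ L * ‖x - y‖) (x y : E) :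
    F y ≤ F x + inner ℝ (G x) (y - x) + L / 2 * ‖y - x‖ ^ 2 := by
  set d := y - x
  have hder (s : ℝ) : HasDerivAt
      (fun r : ℝ => F (x + r • d) - r * inner ℝ (G x) d - L / 2 * ‖d‖ ^ 2 * r ^ 2)
      (inner ℝ (G (x + s • d) - G x) d - L * s * ‖d‖ ^ 2) s :=
    (hasDerivAt_sub_inner_gradient hgrad x d s).sub
      (((hasDerivAt_pow 2 s).const_mul (L / 2 * ‖d‖ ^ 2)).congr_deriv (by ring))
  obtain ⟨c, ⟨hc0, -⟩, hc⟩ := exists_hasDerivAt_eq_slope _ _ zero_lt_one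
    (fun s _ => (hder s).continuousAt.continuousWithinAt) (fun s _ => hder s)
  have hcs : inner ℝ (G (x + c • d) - G x) d ≤ L * c * ‖d‖ ^ 2 := calc
    inner ℝ (G (x + c • d) - G x) d ≤ ‖G (x + c • d) - G x‖ * ‖d‖ := real_inner_le_norm _ _
    _ ≤ L * ‖c • d‖ * ‖d‖ := by gcongr; simpa using hlip (x + c • d) x
    _ = L * c * ‖d‖ ^ 2 := by rw [norm_smul, norm_of_nonneg hc0.le]; ring
  simp only [zero_smul, add_zero, one_smul, sub_zero, div_one, d, add_sub_cancel] at hc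
  linarith

theorem add_inner_gradient_add_sq_norm_le {L : ℝ} (hL : 0 < L)
    (hgrad : ∀ x, HasGradientAt F (G x) x) (hmono : ∀ x y, 0 ≤ inner ℝ (x - y) (G x - G y))
    (hlip : ∀ x y, ‖G x - G y‖ ≤ L * ‖x - y‖) (x y : E) :
    F x + inner ℝ (G x) (y - x) + ‖G y - G x‖ ^ 2 / (2 * L) ≤ F y := by
  set Δ := G y - G x
  -- convexity from `x` and the descent lemma from `y`, both evaluated at the gradient step from `y`
  set z := y - L⁻¹ • Δ
  have hA := add_inner_gradient_le_of_monotone hgrad hmono x z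
  have hB := le_add_inner_gradient_add_of_lipschitz hgrad hlip y z
  rw [sub_right_comm, inner_sub_right, real_inner_smul_right] at hA
  rw [sub_sub_cancel_left, inner_neg_right, real_inner_smul_right, norm_neg,
    norm_smul, norm_inv, norm_of_nonneg hL.le] at hB
  have hΔ : inner ℝ (G y) Δ - inner ℝ (G x) Δ = ‖Δ‖ ^ 2 := by
    rw [← inner_sub_left, real_inner_self_eq_norm_sq]
  have hLΔ : L / 2 * (L⁻¹ * ‖Δ‖) ^ 2 = ‖Δ‖ ^ 2 / (2 * L) := by field_simp
  have hdiv : L⁻¹ * ‖Δ‖ ^ 2 = 2 * (‖Δ‖ ^ 2 / (2 * L)) := by field_simp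
  have hgap : L⁻¹ * inner ℝ (G y) Δ - L⁻¹ * inner ℝ (G x) Δ = 2 * (‖Δ‖ ^ 2 / (2 * L)) := by
    rw [← mul_sub, hΔ, hdiv]
  rw [hLΔ] at hB
  linarith

/-- Baillon–Haddad. -/
theorem sq_norm_sub_le_mul_inner_of_lipschitz_gradient {L : ℝ} (hL : 0 < L)
    (hgrad : ∀ x, HasGradientAt F (G x) x) (hmono : ∀ x y, 0 ≤ inner ℝ (x - y) (G x - G y))
    (hlip : ∀ x y, ‖G x - G y‖ ≤ L * ‖x - y‖) (x y : E) :
    ‖G x - G y‖ ^ 2 ≤ L * inner ℝ (x - y) (G x - G y) := by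
  have hxy := add_inner_gradient_add_sq_norm_le hL hgrad hmono hlip x y
  have hyx := add_inner_gradient_add_sq_norm_le hL hgrad hmono hlip y x
  rw [norm_sub_rev] at hxy
  have hinner : inner ℝ (G x) (y - x) + inner ℝ (G y) (x - y) = -inner ℝ (x - y) (G x - G y) := by
    simp only [inner_sub_right, real_inner_comm (G x), real_inner_comm (G y)]
    ring
  have hhalf : ‖G x - G y‖ ^ 2 / (2 * L) = ‖G x - G y‖ ^ 2 / L / 2 := by ring
  have hsum : ‖G x - G y‖ ^ 2 / L ≤ inner ℝ (x - y) (G x - G y) := by linarith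
  rwa [div_le_iff₀ hL, mul_comm] at hsum

end Gradient

section GradientStep

variable {E : Type*} [NormedAddCommGroup E] [InnerProductSpace ℝ E]

theorem sq_norm_sub_smul_le {b h : E} {a C L : ℝ} (ha : 0 ≤ a) (haL : a * L ≤ 2)
    (hstrong : C * ‖b‖ ^ 2 ≤ inner ℝ b h) (hcoco : ‖h‖ ^ 2 ≤ L * inner ℝ b h) :
    ‖b - a • h‖ ^ 2 ≤ (1 - a * C * (2 - a * L)) * ‖b‖ ^ 2 := by
  rw [norm_sub_sq_real, real_inner_smul_right, norm_smul, Real.norm_eq_abs, mul_pow, sq_abs]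
  have hquad : a ^ 2 * ‖h‖ ^ 2 ≤ a ^ 2 * (L * inner ℝ b h) := by gcongr
  have hlin : a * (2 - a * L) * (C * ‖b‖ ^ 2) ≤ a * (2 - a * L) * inner ℝ b h := by gcongr
  linarith

variable [CompleteSpace E] [Nontrivial E] {F : E → ℝ} {G : E → E}

theorem norm_gradient_step_sub_le {x xstar err : E} {a q C L : ℝ}
    (hgrad : ∀ x, HasGradientAt F (G x) x)
    (hstrong : ∀ x y, C * ‖x - y‖ ^ 2 ≤ inner ℝ (x - y) (G x - G y))
    (hlip : ∀ x y, ‖G x - G y‖ ≤ L * ‖x - y‖) (hzero : G xstar = 0)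
    (hC : 0 < C) (ha : 0 < a) (hq : 0 < q) (haL : 1 ≤ a * L)
    (haLq : (q + 1) * (a * L - 1) ≤ 1) :
    ‖x - a • (G x + err) - xstar‖ ≤
      √(L / C + a * C * ((q + 1) * (a * L - 1) - 1)) * ‖x - xstar‖ +
        √(a * (a * L * (q + 1) - 1) / (q * C)) * ‖err‖ := by
  have hCL : C ≤ L := le_of_strongly_monotone_of_lipschitz hstrong hlip
  have hL : 0 < L := hC.trans_le hCL
  have haL2 : a * L ≤ 2 := by nlinarith
  have hmono (x y : E) : 0 ≤ inner ℝ (x - y) (G x - G y) :=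
    le_trans (by positivity) (hstrong x y)
  have hcoco := sq_norm_sub_le_mul_inner_of_lipschitz_gradient hL hgrad hmono hlip x xstar
  have hcontr : ‖(x - xstar) - a • G x‖ ^ 2 ≤ (1 - a * C * (2 - a * L)) * ‖x - xstar‖ ^ 2 :=
    sq_norm_sub_smul_le ha.le haL2 (by simpa [hzero] using hstrong x xstar)
      (by simpa [hzero] using hcoco)
  have hu : 1 - a * C * (2 - a * L) ≤ L / C + a * C * ((q + 1) * (a * L - 1) - 1) := by
    have : 1 ≤ L / C := (one_le_div hC).2 hCL
    nlinarith [mul_nonneg (mul_nonneg (mul_nonneg ha.le hC.le) hq.le) (sub_nonneg.2 haL)]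
  have hv : a ^ 2 ≤ a * (a * L * (q + 1) - 1) / (q * C) := by
    rw [le_div_iff₀ (by positivity)]
    nlinarith [mul_nonneg (mul_nonneg (sq_nonneg a) hq.le) (sub_nonneg.2 hCL),
      mul_nonneg ha.le (sub_nonneg.2 haL)]
  calc ‖x - a • (G x + err) - xstar‖ = ‖((x - xstar) - a • G x) - a • err‖ := by
        rw [smul_add]; abel_nf
    _ ≤ ‖(x - xstar) - a • G x‖ + ‖a • err‖ := norm_sub_le _ _
    _ ≤ _ := by
      gcongr
      · rw [← Real.sqrt_sq (norm_nonneg (x - xstar)), ← Real.sqrt_mul' _ (sq_nonneg _)]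
        exact Real.le_sqrt_of_sq_le (hcontr.trans (by gcongr))
      · rw [norm_smul, Real.norm_of_nonneg ha.le]
        gcongr
        exact Real.le_sqrt_of_sq_le hv

end GradientStep

section Lp

variable {α E E₁ E₂ E₃ : Type*} [MeasurableSpace α] {μ : Measure α} {p : ENNReal}
  [NormedAddCommGroup E] [NormedAddCommGroup E₁] [NormedAddCommGroup E₂] [NormedAddCommGroup E₃]

theorem lpNorm_two_eq_sqrt_integral {f : α → E} (hf : AEStronglyMeasurable f μ) :
    lpNorm f 2 μ = √(∫ x, ‖f x‖ ^ 2 ∂μ) := by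
  rw [lpNorm_eq_integral_norm_rpow_toReal two_ne_zero ENNReal.ofNat_ne_top hf, Real.sqrt_eq_rpow]
  norm_num

theorem lpNorm_mono_ae_real {f : α → E} {g : α → ℝ} (hg : MemLp g p μ)
    (h : ∀ᵐ x ∂μ, ‖f x‖ ≤ g x) : lpNorm f p μ ≤ lpNorm g p μ := by
  by_cases hf : AEStronglyMeasurable f μ
  · rw [← toReal_eLpNorm hf, ← toReal_eLpNorm hg.aestronglyMeasurable]
    exact ENNReal.toReal_mono hg.eLpNorm_ne_top (eLpNorm_mono_ae_real h)
  · simp [lpNorm_of_not_aestronglyMeasurable hf]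

theorem lpNorm_const_mul_norm {g : α → E} (hg : AEStronglyMeasurable g μ) {c : ℝ} (hc : 0 ≤ c) :
    lpNorm (fun x => c * ‖g x‖) p μ = c * lpNorm g p μ := by
  have : (fun x => c * ‖g x‖) = c • fun x => ‖g x‖ := rfl
  rw [this, lpNorm_const_smul, lpNorm_norm hg, coe_nnnorm, Real.norm_of_nonneg hc]

theorem lpNorm_le_of_ae_norm_le_add (hp : 1 ≤ p) {f : α → E} {g₁ : α → E₁} {g₂ : α → E₂}
    {g₃ : α → E₃} (hg₁ : MemLp g₁ p μ) (hg₂ : MemLp g₂ p μ) (hg₃ : MemLp g₃ p μ) {c₁ c₂ : ℝ}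
    (hc₁ : 0 ≤ c₁) (hc₂ : 0 ≤ c₂) (h : ∀ᵐ x ∂μ, ‖f x‖ ≤ c₁ * ‖g₁ x‖ + c₂ * ‖g₂ x‖ + ‖g₃ x‖) :
    lpNorm f p μ ≤ c₁ * lpNorm g₁ p μ + c₂ * lpNorm g₂ p μ + lpNorm g₃ p μ := by
  have m₁ : MemLp (fun x => c₁ * ‖g₁ x‖) p μ := hg₁.norm.const_mul c₁
  have m₂ : MemLp (fun x => c₂ * ‖g₂ x‖) p μ := hg₂.norm.const_mul c₂
  calc lpNorm f p μ ≤ lpNorm (fun x => c₁ * ‖g₁ x‖ + c₂ * ‖g₂ x‖ + ‖g₃ x‖) p μ :=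
        lpNorm_mono_ae_real ((m₁.add m₂).add hg₃.norm) h
    _ ≤ lpNorm (fun x => c₁ * ‖g₁ x‖) p μ + lpNorm (fun x => c₂ * ‖g₂ x‖) p μ +
          lpNorm (fun x => ‖g₃ x‖) p μ :=
        (lpNorm_add_le (m₁.add m₂) hp).trans (add_le_add_left (lpNorm_add_le m₁ hp) _)
    _ = c₁ * lpNorm g₁ p μ + c₂ * lpNorm g₂ p μ + lpNorm g₃ p μ := by
      rw [lpNorm_const_mul_norm hg₁.1 hc₁, lpNorm_const_mul_norm hg₂.1 hc₂,
        lpNorm_norm hg₃.1]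

theorem lpNorm_two_le_of_integral_sq_le {f : α → E} (hf : AEStronglyMeasurable f μ) {M : ℝ}
    (hM : 0 ≤ M) (h : ∫ x, ‖f x‖ ^ 2 ∂μ ≤ M ^ 2) : lpNorm f 2 μ ≤ M := by
  rw [lpNorm_two_eq_sqrt_integral hf]
  exact Real.sqrt_le_iff.2 ⟨hM, h⟩

end Lp

theorem stmt_2_general {p : ℕ} (hp : 1 ≤ p)
    {Ω : Type} [MeasurableSpace Ω] (P : Measure Ω)
    (θhat θstar e : ℕ → Ω → EuclideanSpace ℝ (Fin p))
    (f : ℕ → Ω → EuclideanSpace ℝ (Fin p) → ℝ)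
    (g : ℕ → Ω → EuclideanSpace ℝ (Fin p) → EuclideanSpace ℝ (Fin p))
    (a q C L M B u v : ℕ → ℝ)
    (hmeas1 : ∀ k, Measurable (θhat k))
    (hmeas2 : ∀ k, Measurable (θstar k))
    (hCpos : ∀ k, 0 < C k) (hM : ∀ k, 0 ≤ M k) (hB : ∀ k, 0 ≤ B k)
    (hreg : ∀ k, ∀ᵐ ω ∂P,
      ContDiff ℝ 1 (f k ω) ∧
      (∀ x, HasGradientAt (f k ω) (g k ω x) x) ∧
      (∀ x y : EuclideanSpace ℝ (Fin p),
        C k * ‖x - y‖ ^ 2 ≤ (inner ℝ (x - y) (g k ω x - g k ω y) : ℝ)) ∧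
      (∀ x y : EuclideanSpace ℝ (Fin p), ‖g k ω x - g k ω y‖ ≤ L k * ‖x - y‖) ∧
      g k ω (θstar k ω) = 0)
    (hrec : ∀ k, ∀ᵐ ω ∂P,
      θhat (k + 1) ω = θhat k ω - a k • (g k ω (θhat k ω) + e k ω))
    (heL2 : ∀ k, MemLp (e k) 2 P)
    (heM : ∀ k, (∫ ω, ‖e k ω‖ ^ 2 ∂P) ≤ M k ^ 2)
    (hdL2 : ∀ k, MemLp (fun ω => θstar (k + 1) ω - θstar k ω) 2 P)
    (hdB : ∀ k, (∫ ω, ‖θstar (k + 1) ω - θstar k ω‖ ^ 2 ∂P) ≤ B k ^ 2)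
    (ha : ∀ k, 0 < a k) (hq : ∀ k, 0 < q k)
    (haL : ∀ k, 1 ≤ a k * L k)
    (haLq : ∀ k, (q k + 1) * (a k * L k - 1) ≤ 1)
    (hu : ∀ k, u k = L k / C k + a k * C k * ((q k + 1) * (a k * L k - 1) - 1))
    (hv : ∀ k, v k = a k * (a k * L k * (q k + 1) - 1) / (q k * C k))
    (hint : ∀ k, Integrable (fun ω => ‖θhat k ω - θstar k ω‖ ^ 2) P) :
    ∀ k, Real.sqrt (∫ ω, ‖θhat (k + 1) ω - θstar (k + 1) ω‖ ^ 2 ∂P) ≤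
      Real.sqrt (u k * ∫ ω, ‖θhat k ω - θstar k ω‖ ^ 2 ∂P) +
        M k * Real.sqrt (v k) + B k := by
  intro k
  have : Nonempty (Fin p) := ⟨⟨0, hp⟩⟩
  have hstep : ∀ᵐ ω ∂P, ‖θhat (k + 1) ω - θstar (k + 1) ω‖ ≤
      √(u k) * ‖θhat k ω - θstar k ω‖ + √(v k) * ‖e k ω‖ + ‖θstar (k + 1) ω - θstar k ω‖ := by
    filter_upwards [hreg k, hrec k] with ω hregω hrecω
    obtain ⟨-, hgrad, hstrong, hlip, hzero⟩ := hregω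
    calc ‖θhat (k + 1) ω - θstar (k + 1) ω‖
        = ‖(θhat (k + 1) ω - θstar k ω) - (θstar (k + 1) ω - θstar k ω)‖ := by abel_nf
      _ ≤ ‖θhat (k + 1) ω - θstar k ω‖ + ‖θstar (k + 1) ω - θstar k ω‖ := norm_sub_le _ _
      _ ≤ _ := by
        rw [hrecω, hu k, hv k]
        gcongr
        exact norm_gradient_step_sub_le hgrad hstrong hlip hzero (hCpos k) (ha k) (hq k) (haL k)
          (haLq k)
  have hmeas (j : ℕ) : AEStronglyMeasurable (fun ω => θhat j ω - θstar j ω) P :=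
    ((hmeas1 j).sub (hmeas2 j)).aestronglyMeasurable
  have hL2 := lpNorm_le_of_ae_norm_le_add one_le_two
    ((memLp_two_iff_integrable_sq_norm (hmeas k)).2 (hint k)) (heL2 k) (hdL2 k)
    (Real.sqrt_nonneg _) (Real.sqrt_nonneg _) hstep
  rw [lpNorm_two_eq_sqrt_integral (hmeas (k + 1)), lpNorm_two_eq_sqrt_integral (hmeas k),
    ← Real.sqrt_mul' _ (integral_nonneg fun _ => by positivity)] at hL2
  have he := lpNorm_two_le_of_integral_sq_le (heL2 k).1 (hM k) (heM k)
  have hd := lpNorm_two_le_of_integral_sq_le (hdL2 k).1 (hB k) (hdB k)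
  have hev := mul_le_mul_of_nonneg_left he (Real.sqrt_nonneg (v k))
  linarith

/-- RMS bound under the bounded-drift time-varying stochastic approximation setting:
for every `k`,
`√(E‖θ̂_{k+1} − θ*_{k+1}‖²) ≤ √(u_k·E‖θ̂_k − θ*_k‖²) + M_k·√(v_k) + B_k`. -/
theorem stmt_2 {p : ℕ} (hp : 1 ≤ p)
    {Ω : Type} [MeasurableSpace Ω] (P : Measure Ω) [IsProbabilityMeasure P]
    (θhat θstar e : ℕ → Ω → EuclideanSpace ℝ (Fin p))
    (f : ℕ → Ω → EuclideanSpace ℝ (Fin p) → ℝ)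
    (g : ℕ → Ω → EuclideanSpace ℝ (Fin p) → EuclideanSpace ℝ (Fin p))
    (a q C L M B u v : ℕ → ℝ)
    (hmeas1 : ∀ k, Measurable (θhat k))
    (hmeas2 : ∀ k, Measurable (θstar k))
    (hmeas3 : ∀ k, Measurable (e k))
    (hCpos : ∀ k, 0 < C k) (hM : ∀ k, 0 ≤ M k) (hB : ∀ k, 0 ≤ B k)
    (hreg : ∀ k, ∀ᵐ ω ∂P,
      ContDiff ℝ 1 (f k ω) ∧
      (∀ x, HasGradientAt (f k ω) (g k ω x) x) ∧
      (∀ x y : EuclideanSpace ℝ (Fin p),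
        C k * ‖x - y‖ ^ 2 ≤ (inner ℝ (x - y) (g k ω x - g k ω y) : ℝ)) ∧
      (∀ x y : EuclideanSpace ℝ (Fin p), ‖g k ω x - g k ω y‖ ≤ L k * ‖x - y‖) ∧
      g k ω (θstar k ω) = 0)
    (hrec : ∀ k, ∀ᵐ ω ∂P,
      θhat (k + 1) ω = θhat k ω - a k • (g k ω (θhat k ω) + e k ω))
    (heL2 : ∀ k, MemLp (e k) 2 P)
    (heM : ∀ k, (∫ ω, ‖e k ω‖ ^ 2 ∂P) ≤ M k ^ 2)
    (hdL2 : ∀ k, MemLp (fun ω => θstar (k + 1) ω - θstar k ω) 2 P)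
    (hdB : ∀ k, (∫ ω, ‖θstar (k + 1) ω - θstar k ω‖ ^ 2 ∂P) ≤ B k ^ 2)
    (ha : ∀ k, 0 < a k) (hq : ∀ k, 0 < q k)
    (haL : ∀ k, 1 ≤ a k * L k)
    (haLq : ∀ k, (q k + 1) * (a k * L k - 1) ≤ 1)
    (hu : ∀ k, u k = L k / C k + a k * C k * ((q k + 1) * (a k * L k - 1) - 1))
    (hv : ∀ k, v k = a k * (a k * L k * (q k + 1) - 1) / (q k * C k))
    (hint : ∀ k, Integrable (fun ω => ‖θhat k ω - θstar k ω‖ ^ 2) P) :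
    ∀ k, Real.sqrt (∫ ω, ‖θhat (k + 1) ω - θstar (k + 1) ω‖ ^ 2 ∂P) ≤
      Real.sqrt (u k * ∫ ω, ‖θhat k ω - θstar k ω‖ ^ 2 ∂P) +
        M k * Real.sqrt (v k) + B k :=
  stmt_2_general hp P θhat θstar e f g a q C L M B u v hmeas1 hmeas2 hCpos hM hB hreg hrec heL2 heM
    hdL2 hdB ha hq haL haLq hu hv hint
end

section
/- Let p ≥ 1. Let P be a p×p permutation matrix, Q a p×p orthogonal matrix, L a real p×p invertible matrix with σ̲‖x‖ ≤ ‖Lᵀx‖ ≤ σ̄‖x‖ for all x ∈ ℝ^p (0 < σ̲ ≤ σ̄), and Λ = diag(λ_1,…,λ_p). Set H̄ := Pᵀ L Q Λ Qᵀ Lᵀ P, and suppose 0 < λ̲ ≤ |μ| ≤ λ̄ for every eigenvalue μ of the symmetric matrix H̄. For τ > 0 define Λ̄ := diag(max{τ,|λ_1|}, …, max{τ,|λ_p|}) and H̄̄ := Pᵀ L Q Λ̄ Qᵀ Lᵀ P. Then for all x ∈ ℝ^p: σ̲²·max{τ, λ̲/σ̄²}·‖x‖² ≤ xᵀ H̄̄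 x ≤ σ̄²·max{τ, λ̄/σ̲²}·‖x‖². In particular all eigenvalues of H̄̄ lie in the interval [σ̲²·max{τ, λ̲/σ̄²}, σ̄²·max{τ, λ̄/σ̲²}]. -/
/-! Write `H̄ = Bᵀ Λ B` with `B = Qᵀ Lᵀ P`. As `Q` and `P` are orthogonal, `σ̲‖x‖ ≤ ‖Bx‖ ≤ σ̄‖x‖`,
so `B` is invertible. Testing `H̄` on `v = B⁻¹ eⱼ` gives `vᵀ H̄ v = λⱼ` and `H̄ v = λⱼ Bᵀ eⱼ`, and the
spectral theorem for `H̄` gives `|vᵀ H̄ v| ≤ λ̄ ‖v‖²` and `‖H̄ v‖ ≥ λ̲ ‖v‖`; together with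
`1/σ̄ ≤ ‖v‖ ≤ 1/σ̲` and `‖Bᵀ eⱼ‖ ≤ σ̄` this yields `λ̲/σ̄² ≤ |λⱼ| ≤ λ̄/σ̲²`. Every diagonal entry
of `Λ̄` therefore lies in `[max{τ, λ̲/σ̄²}, max{τ, λ̄/σ̲²}]`, and `xᵀ H̄̄ x = (Bx)ᵀ Λ̄ (Bx)` gives the
Rayleigh bounds, which in turn bound the eigenvalues. -/

open Matrix

noncomputable def euclNorm {p : ℕ} (x : Fin p → ℝ) : ℝ := Real.sqrt (∑ i, x i ^ 2)

def IsPermutationMatrix {p : ℕ} (M : Matrix (Fin p) (Fin p) ℝ) : Prop :=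
  ∃ σ : Equiv.Perm (Fin p), ∀ i j, M i j = if i = σ j then 1 else 0

namespace Matrix

variable {n : Type*} [Fintype n]

section LinearOrderedRing

variable {R : Type*} [CommRing R] [LinearOrder R] [IsStrictOrderedRing R]

theorem dotProduct_self_nonneg (v : n → R) : 0 ≤ v ⬝ᵥ v :=
  Finset.sum_nonneg fun i _ => mul_self_nonneg (v i)

theorem dotProduct_self_pos {v : n → R} (hv : v ≠ 0) : 0 < v ⬝ᵥ v :=
  (dotProduct_self_nonneg v).lt_of_ne' (mt dotProduct_self_eq_zero.mp hv)

theorem dotProduct_sq_le_dotProduct_self_mul (u v : n → R) :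
    (u ⬝ᵥ v) ^ 2 ≤ (u ⬝ᵥ u) * (v ⬝ᵥ v) := by
  simpa only [dotProduct, sq] using Finset.sum_mul_sq_le_sq_mul_sq Finset.univ u v

end LinearOrderedRing

theorem dotProduct_transpose_mul_mul_mulVec {m R : Type*} [Fintype m] [CommSemiring R]
    (A : Matrix m m R) (B : Matrix m n R) (x : n → R) :
    x ⬝ᵥ (Bᵀ * A * B) *ᵥ x = (B *ᵥ x) ⬝ᵥ A *ᵥ (B *ᵥ x) := by
  rw [← mulVec_mulVec, ← mulVec_mulVec, dotProduct_mulVec, vecMul_transpose]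

theorem transpose_mulVec_dotProduct_self_le {B : Matrix n n ℝ} {b : ℝ} (hb : 0 ≤ b)
    (hB : ∀ x, (B *ᵥ x) ⬝ᵥ (B *ᵥ x) ≤ b * (x ⬝ᵥ x)) (y : n → ℝ) :
    (Bᵀ *ᵥ y) ⬝ᵥ (Bᵀ *ᵥ y) ≤ b * (y ⬝ᵥ y) := by
  set w := Bᵀ *ᵥ y
  have hw : w ⬝ᵥ w = (B *ᵥ w) ⬝ᵥ y := by rw [dotProduct_mulVec, vecMul_transpose]
  have hcs : (w ⬝ᵥ w) ^ 2 ≤ b * (w ⬝ᵥ w) * (y ⬝ᵥ y) := by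
    calc (w ⬝ᵥ w) ^ 2 ≤ ((B *ᵥ w) ⬝ᵥ (B *ᵥ w)) * (y ⬝ᵥ y) :=
          hw ▸ dotProduct_sq_le_dotProduct_self_mul _ _
      _ ≤ b * (w ⬝ᵥ w) * (y ⬝ᵥ y) := by gcongr; exacts [dotProduct_self_nonneg y, hB w]
  rcases (dotProduct_self_nonneg w).eq_or_lt with hw0 | hw0
  · rw [← hw0]
    exact mul_nonneg hb (dotProduct_self_nonneg y)
  · nlinarith

theorem eigenvalue_bounds_of_rayleigh_bounds {A : Matrix n n ℝ} {m M : ℝ}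
    (hA : ∀ x, m * (x ⬝ᵥ x) ≤ x ⬝ᵥ A *ᵥ x ∧ x ⬝ᵥ A *ᵥ x ≤ M * (x ⬝ᵥ x)) {μ : ℝ} {v : n → ℝ}
    (hv : v ≠ 0) (hAv : A *ᵥ v = μ • v) : m ≤ μ ∧ μ ≤ M := by
  have hquad : v ⬝ᵥ A *ᵥ v = μ * (v ⬝ᵥ v) := by rw [hAv, dotProduct_smul, smul_eq_mul]
  obtain ⟨hlo, hhi⟩ := hA v
  rw [hquad] at hlo hhi
  exact ⟨le_of_mul_le_mul_right hlo (dotProduct_self_pos hv),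
    le_of_mul_le_mul_right hhi (dotProduct_self_pos hv)⟩

variable [DecidableEq n]

theorem mulVec_surjective_of_mul_dotProduct_self_le {B : Matrix n n ℝ} {a : ℝ} (ha : 0 < a)
    (hB : ∀ x, a * (x ⬝ᵥ x) ≤ (B *ᵥ x) ⬝ᵥ (B *ᵥ x)) : Function.Surjective B.mulVec := by
  refine mulVec_surjective_iff_isUnit.mpr (mulVec_injective_iff_isUnit.mp fun x y hxy => ?_)
  have h := hB (x - y)
  rw [mulVec_sub, hxy, sub_self, zero_dotProduct] at h
  have h0 : (x - y) ⬝ᵥ (x - y) = 0 :=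
    le_antisymm (nonpos_of_mul_nonpos_right h ha) (dotProduct_self_nonneg _)
  exact sub_eq_zero.mp (dotProduct_self_eq_zero.mp h0)

theorem dotProduct_self_mulVec_of_transpose_mul_self {U : Matrix n n ℝ} (hU : Uᵀ * U = 1)
    (x : n → ℝ) : (U *ᵥ x) ⬝ᵥ (U *ᵥ x) = x ⬝ᵥ x := by
  rw [dotProduct_mulVec, ← mulVec_transpose, mulVec_mulVec, hU, one_mulVec]

theorem dotProduct_diagonal_mulVec_self (d y : n → ℝ) :
    y ⬝ᵥ diagonal d *ᵥ y = ∑ i, d i * (y i * y i) := by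
  simp only [dotProduct, mulVec_diagonal]
  exact Finset.sum_congr rfl fun i _ => by ring

theorem mul_dotProduct_self_le_dotProduct_diagonal_mulVec {a : ℝ} {d : n → ℝ}
    (h : ∀ i, a ≤ d i) (y : n → ℝ) : a * (y ⬝ᵥ y) ≤ y ⬝ᵥ diagonal d *ᵥ y := by
  rw [dotProduct_diagonal_mulVec_self, dotProduct, Finset.mul_sum]
  exact Finset.sum_le_sum fun i _ => mul_le_mul_of_nonneg_right (h i) (mul_self_nonneg _)

theorem dotProduct_diagonal_mulVec_le_mul_dotProduct_self {b : ℝ} {d : n → ℝ}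
    (h : ∀ i, d i ≤ b) (y : n → ℝ) : y ⬝ᵥ diagonal d *ᵥ y ≤ b * (y ⬝ᵥ y) := by
  rw [dotProduct_diagonal_mulVec_self, dotProduct, Finset.mul_sum]
  exact Finset.sum_le_sum fun i _ => mul_le_mul_of_nonneg_right (h i) (mul_self_nonneg _)

theorem IsHermitian.exists_transpose_mul_diagonal_mul {H : Matrix n n ℝ} (hH : H.IsHermitian) :
    ∃ (C : Matrix n n ℝ) (μ : n → ℝ), Cᵀ * C = 1 ∧ H = Cᵀ * diagonal μ * C ∧
      ∀ i, ∃ v ≠ 0, H *ᵥ v = μ i • v := by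
  refine ⟨star (hH.eigenvectorUnitary : Matrix n n ℝ), hH.eigenvalues, ?_, ?_, fun i => ?_⟩
  · simpa [star_eq_conjTranspose, conjTranspose_eq_transpose_of_trivial] using
      Unitary.coe_mul_star_self hH.eigenvectorUnitary
  · conv_lhs => rw [hH.spectral_theorem]
    simp [star_eq_conjTranspose, conjTranspose_eq_transpose_of_trivial, RCLike.ofReal_real_eq_id]
  · refine ⟨_, ?_, hH.mulVec_eigenvectorBasis i⟩
    simpa using hH.eigenvectorBasis.orthonormal.ne_zero i

theorem IsHermitian.abs_dotProduct_mulVec_le {H : Matrix n n ℝ} (hH : H.IsHermitian) {hi : ℝ}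
    (heig : ∀ μ v, v ≠ 0 → H *ᵥ v = μ • v → |μ| ≤ hi) (v : n → ℝ) :
    |v ⬝ᵥ H *ᵥ v| ≤ hi * (v ⬝ᵥ v) := by
  obtain ⟨C, μ, hC, rfl, hμvec⟩ := hH.exists_transpose_mul_diagonal_mul
  have hμ (i : n) : |μ i| ≤ hi := by
    obtain ⟨w, hw, hwμ⟩ := hμvec i
    exact heig _ w hw hwμ
  rw [dotProduct_transpose_mul_mul_mulVec, ← dotProduct_self_mulVec_of_transpose_mul_self hC v,
    abs_le, ← neg_mul]
  exact ⟨mul_dotProduct_self_le_dotProduct_diagonal_mulVec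
      (fun i => neg_le.mp ((neg_le_abs _).trans (hμ i))) _,
    dotProduct_diagonal_mulVec_le_mul_dotProduct_self (fun i => (le_abs_self _).trans (hμ i)) _⟩

theorem IsHermitian.sq_mul_dotProduct_self_le {H : Matrix n n ℝ} (hH : H.IsHermitian) {lo : ℝ}
    (hlo : 0 ≤ lo) (heig : ∀ μ v, v ≠ 0 → H *ᵥ v = μ • v → lo ≤ |μ|) (v : n → ℝ) :
    lo ^ 2 * (v ⬝ᵥ v) ≤ (H *ᵥ v) ⬝ᵥ (H *ᵥ v) := by
  obtain ⟨C, μ, hC, rfl, hμvec⟩ := hH.exists_transpose_mul_diagonal_mul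
  have hμ (i : n) : lo ^ 2 ≤ μ i ^ 2 := by
    obtain ⟨w, hw, hwμ⟩ := hμvec i
    exact sq_abs (μ i) ▸ pow_le_pow_left₀ hlo (heig _ w hw hwμ) 2
  have hCt := dotProduct_self_mulVec_of_transpose_mul_self (U := Cᵀ)
    (by rw [transpose_transpose, mul_eq_one_comm, hC])
  set y := C *ᵥ v
  calc lo ^ 2 * (v ⬝ᵥ v) = lo ^ 2 * (y ⬝ᵥ y) := by
        rw [dotProduct_self_mulVec_of_transpose_mul_self hC]
    _ ≤ y ⬝ᵥ diagonal (fun i => μ i ^ 2) *ᵥ y :=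
      mul_dotProduct_self_le_dotProduct_diagonal_mulVec hμ y
    _ = (diagonal μ *ᵥ y) ⬝ᵥ (diagonal μ *ᵥ y) := by
      simp only [dotProduct, mulVec_diagonal]
      exact Finset.sum_congr rfl fun i _ => by ring
    _ = _ := by rw [← mulVec_mulVec, ← mulVec_mulVec, hCt]

theorem isHermitian_transpose_mul_diagonal_mul (B : Matrix n n ℝ) (d : n → ℝ) :
    (Bᵀ * diagonal d * B).IsHermitian := by
  simpa [conjTranspose_eq_transpose_of_trivial] using
    isHermitian_conjTranspose_mul_mul B (isHermitian_diagonal d)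

section CongruentDiagonal

variable {B : Matrix n n ℝ} {d : n → ℝ} {a : ℝ}

theorem abs_le_div_of_abs_eigenvalue_le (ha : 0 < a)
    (hB : ∀ x, a * (x ⬝ᵥ x) ≤ (B *ᵥ x) ⬝ᵥ (B *ᵥ x)) {hi : ℝ}
    (heig : ∀ μ v, v ≠ 0 → (Bᵀ * diagonal d * B) *ᵥ v = μ • v → |μ| ≤ hi) (j : n) :
    |d j| ≤ hi / a := by
  obtain ⟨v, hv⟩ := mulVec_surjective_of_mul_dotProduct_self_le ha hB (Pi.single j 1)
  have hquad : v ⬝ᵥ (Bᵀ * diagonal d * B) *ᵥ v = d j := by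
    rw [dotProduct_transpose_mul_mul_mulVec, hv]
    simp
  have hspec := (isHermitian_transpose_mul_diagonal_mul B d).abs_dotProduct_mulVec_le heig v
  rw [hquad] at hspec
  have hv1 : a * (v ⬝ᵥ v) ≤ 1 := by simpa [hv] using hB v
  have hv0 : 0 < v ⬝ᵥ v := dotProduct_self_pos fun h => by simp [h, eq_comm] at hv
  have hhi : 0 ≤ hi := nonneg_of_mul_nonneg_left ((abs_nonneg _).trans hspec) hv0
  rw [le_div_iff₀' ha]
  calc a * |d j| ≤ a * (hi * (v ⬝ᵥ v)) := mul_le_mul_of_nonneg_left hspec ha.le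
    _ = hi * (a * (v ⬝ᵥ v)) := by ring
    _ ≤ hi := mul_le_of_le_one_right hhi hv1

theorem div_le_abs_of_le_abs_eigenvalue {b : ℝ} (ha : 0 < a)
    (hB : ∀ x, a * (x ⬝ᵥ x) ≤ (B *ᵥ x) ⬝ᵥ (B *ᵥ x) ∧ (B *ᵥ x) ⬝ᵥ (B *ᵥ x) ≤ b * (x ⬝ᵥ x))
    {lo : ℝ} (hlo : 0 ≤ lo)
    (heig : ∀ μ v, v ≠ 0 → (Bᵀ * diagonal d * B) *ᵥ v = μ • v → lo ≤ |μ|) (j : n) :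
    lo / b ≤ |d j| := by
  obtain ⟨v, hv⟩ := mulVec_surjective_of_mul_dotProduct_self_le ha (fun x => (hB x).1)
    (Pi.single j 1)
  have hv1 : 1 ≤ b * (v ⬝ᵥ v) := by simpa [hv] using (hB v).2
  have hb : 0 ≤ b := by nlinarith [dotProduct_self_nonneg v]
  set y : n → ℝ := Pi.single j (d j)
  have hHv : (Bᵀ * diagonal d * B) *ᵥ v = Bᵀ *ᵥ y := by
    rw [← mulVec_mulVec, ← mulVec_mulVec, hv, diagonal_mulVec_single, mul_one]
  have hy : y ⬝ᵥ y = |d j| ^ 2 := by simp [y, sq]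
  have hspec := (isHermitian_transpose_mul_diagonal_mul B d).sq_mul_dotProduct_self_le hlo heig v
  rw [hHv] at hspec
  have hBt := transpose_mulVec_dotProduct_self_le hb (fun x => (hB x).2) y
  have hsq : lo ^ 2 ≤ (|d j| * b) ^ 2 :=
    calc lo ^ 2 ≤ lo ^ 2 * (b * (v ⬝ᵥ v)) := le_mul_of_one_le_right (sq_nonneg _) hv1
      _ = b * (lo ^ 2 * (v ⬝ᵥ v)) := by ring
      _ ≤ b * (b * (y ⬝ᵥ y)) := mul_le_mul_of_nonneg_left (hspec.trans hBt) hb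
      _ = (|d j| * b) ^ 2 := by rw [hy]; ring
  exact div_le_of_le_mul₀ hb (abs_nonneg _) <|
    (pow_le_pow_iff_left₀ hlo (by positivity) two_ne_zero).mp hsq

theorem transpose_mul_diagonal_mul_rayleigh_bounds {b m M : ℝ} (hm : 0 ≤ m) (hM : 0 ≤ M)
    (hd : ∀ j, m ≤ d j ∧ d j ≤ M)
    (hB : ∀ x, a * (x ⬝ᵥ x) ≤ (B *ᵥ x) ⬝ᵥ (B *ᵥ x) ∧ (B *ᵥ x) ⬝ᵥ (B *ᵥ x) ≤ b * (x ⬝ᵥ x))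
    (x : n → ℝ) :
    a * m * (x ⬝ᵥ x) ≤ x ⬝ᵥ (Bᵀ * diagonal d * B) *ᵥ x ∧
      x ⬝ᵥ (Bᵀ * diagonal d * B) *ᵥ x ≤ b * M * (x ⬝ᵥ x) := by
  rw [dotProduct_transpose_mul_mul_mulVec]
  constructor
  · calc a * m * (x ⬝ᵥ x) = m * (a * (x ⬝ᵥ x)) := by ring
      _ ≤ m * ((B *ᵥ x) ⬝ᵥ (B *ᵥ x)) := mul_le_mul_of_nonneg_left (hB x).1 hm
      _ ≤ _ := mul_dotProduct_self_le_dotProduct_diagonal_mulVec (fun j => (hd j).1) _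
  · calc _ ≤ M * ((B *ᵥ x) ⬝ᵥ (B *ᵥ x)) :=
          dotProduct_diagonal_mulVec_le_mul_dotProduct_self (fun j => (hd j).2) _
      _ ≤ M * (b * (x ⬝ᵥ x)) := mul_le_mul_of_nonneg_left (hB x).2 hM
      _ = b * M * (x ⬝ᵥ x) := by ring

end CongruentDiagonal

theorem mul_mul_mulVec_dotProduct_self_bounds {U A V : Matrix n n ℝ} (hU : Uᵀ * U = 1)
    (hV : Vᵀ * V = 1) {a b : ℝ}
    (hA : ∀ x, a * (x ⬝ᵥ x) ≤ (A *ᵥ x) ⬝ᵥ (A *ᵥ x) ∧ (A *ᵥ x) ⬝ᵥ (A *ᵥ x) ≤ b * (x ⬝ᵥ x))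
    (x : n → ℝ) :
    a * (x ⬝ᵥ x) ≤ ((U * A * V) *ᵥ x) ⬝ᵥ ((U * A * V) *ᵥ x) ∧
      ((U * A * V) *ᵥ x) ⬝ᵥ ((U * A * V) *ᵥ x) ≤ b * (x ⬝ᵥ x) := by
  rw [← mulVec_mulVec, ← mulVec_mulVec, dotProduct_self_mulVec_of_transpose_mul_self hU,
    ← dotProduct_self_mulVec_of_transpose_mul_self hV x]
  exact hA (V *ᵥ x)

end Matrix

theorem euclNorm_nonneg {p : ℕ} (x : Fin p → ℝ) : 0 ≤ euclNorm x :=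
  Real.sqrt_nonneg _

theorem euclNorm_sq {p : ℕ} (x : Fin p → ℝ) : euclNorm x ^ 2 = x ⬝ᵥ x := by
  rw [euclNorm, Real.sq_sqrt (Finset.sum_nonneg fun i _ => sq_nonneg (x i))]
  simp only [dotProduct, sq]

theorem dotProduct_self_bounds_of_euclNorm_bounds {p : ℕ} {A : Matrix (Fin p) (Fin p) ℝ}
    {a b : ℝ} (ha : 0 ≤ a) (hlo : ∀ x, a * euclNorm x ≤ euclNorm (A *ᵥ x))
    (hup : ∀ x, euclNorm (A *ᵥ x) ≤ b * euclNorm x) (x : Fin p → ℝ) :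
    a ^ 2 * (x ⬝ᵥ x) ≤ (A *ᵥ x) ⬝ᵥ (A *ᵥ x) ∧ (A *ᵥ x) ⬝ᵥ (A *ᵥ x) ≤ b ^ 2 * (x ⬝ᵥ x) := by
  simp only [← euclNorm_sq, ← mul_pow]
  exact ⟨pow_le_pow_left₀ (mul_nonneg ha (euclNorm_nonneg x)) (hlo x) 2,
    pow_le_pow_left₀ (euclNorm_nonneg _) (hup x) 2⟩

theorem IsPermutationMatrix.transpose_mul_self {p : ℕ} {M : Matrix (Fin p) (Fin p) ℝ}
    (hM : IsPermutationMatrix M) : Mᵀ * M = 1 := by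
  obtain ⟨σ, hσ⟩ := hM
  have hMt : Mᵀ = σ.permMatrix ℝ := by
    ext i j
    simp [hσ, PEquiv.toMatrix_apply, eq_comm]
  calc Mᵀ * M = σ.permMatrix ℝ * (σ.permMatrix ℝ)ᵀ := by rw [← hMt, transpose_transpose]
    _ = 1 := by rw [transpose_permMatrix, ← permMatrix_mul, inv_mul_cancel, permMatrix_one]

theorem stmt_11_general {p : ℕ}
    (Pm L Q : Matrix (Fin p) (Fin p) ℝ)
    (hPm : IsPermutationMatrix Pm) (hQ : Q * Qᵀ = 1)
    (lam : Fin p → ℝ)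
    (σlo σhi : ℝ) (hσlo : 0 < σlo)
    (hLlow : ∀ x : Fin p → ℝ, σlo * euclNorm x ≤ euclNorm (Lᵀ *ᵥ x))
    (hLup : ∀ x : Fin p → ℝ, euclNorm (Lᵀ *ᵥ x) ≤ σhi * euclNorm x)
    (lamlo lamhi : ℝ) (hlamlo : 0 < lamlo)
    (heig : ∀ μ : ℝ, ∀ v : Fin p → ℝ, v ≠ 0 →
      (Pmᵀ * L * Q * Matrix.diagonal lam * Qᵀ * Lᵀ * Pm) *ᵥ v = μ • v →
      lamlo ≤ |μ| ∧ |μ| ≤ lamhi)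
    (τ : ℝ) (hτ : 0 < τ) :
    (∀ x : Fin p → ℝ,
      σlo ^ 2 * max τ (lamlo / σhi ^ 2) * euclNorm x ^ 2 ≤
          x ⬝ᵥ (Pmᵀ * L * Q * Matrix.diagonal (fun j => max τ |lam j|) * Qᵀ * Lᵀ * Pm) *ᵥ x ∧
        x ⬝ᵥ (Pmᵀ * L * Q * Matrix.diagonal (fun j => max τ |lam j|) * Qᵀ * Lᵀ * Pm) *ᵥ x ≤
          σhi ^ 2 * max τ (lamhi / σlo ^ 2) * euclNorm x ^ 2) ∧
    (∀ μ : ℝ, ∀ v : Fin p → ℝ, v ≠ 0 →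
      (Pmᵀ * L * Q * Matrix.diagonal (fun j => max τ |lam j|) * Qᵀ * Lᵀ * Pm) *ᵥ v = μ • v →
      σlo ^ 2 * max τ (lamlo / σhi ^ 2) ≤ μ ∧ μ ≤ σhi ^ 2 * max τ (lamhi / σlo ^ 2)) := by
  set B := Qᵀ * Lᵀ * Pm
  have hfactor (d : Fin p → ℝ) :
      Pmᵀ * L * Q * diagonal d * Qᵀ * Lᵀ * Pm = Bᵀ * diagonal d * B := by
    simp only [B, transpose_mul, transpose_transpose, Matrix.mul_assoc]
  have hB := mul_mul_mulVec_dotProduct_self_bounds (by rwa [transpose_transpose])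
    hPm.transpose_mul_self (dotProduct_self_bounds_of_euclNorm_bounds hσlo.le hLlow hLup)
  have heigB : ∀ μ v, v ≠ 0 → (Bᵀ * diagonal lam * B) *ᵥ v = μ • v →
      lamlo ≤ |μ| ∧ |μ| ≤ lamhi := by
    simpa only [hfactor] using heig
  have hlam (j : Fin p) : max τ (lamlo / σhi ^ 2) ≤ max τ |lam j| ∧
      max τ |lam j| ≤ max τ (lamhi / σlo ^ 2) :=
    ⟨max_le_max_left τ <| div_le_abs_of_le_abs_eigenvalue (by positivity) hB hlamlo.le
        (fun μ v hv h => (heigB μ v hv h).1) j,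
      max_le_max_left τ <| abs_le_div_of_abs_eigenvalue_le (by positivity) (fun x => (hB x).1)
        (fun μ v hv h => (heigB μ v hv h).2) j⟩
  have hrayleigh := transpose_mul_diagonal_mul_rayleigh_bounds
    (le_max_of_le_left hτ.le) (le_max_of_le_left hτ.le) hlam hB
  refine ⟨fun x => ?_, fun μ v hv hμ => eigenvalue_bounds_of_rayleigh_bounds hrayleigh hv ?_⟩
  · simpa only [euclNorm_sq, hfactor] using hrayleigh x
  · rwa [hfactor] at hμ

/-- Uniform Rayleigh-quotient (hence eigenvalue) bounds for the preconditioned Hessian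
estimate: with `H̄ = PᵀLQΛQᵀLᵀP`, `σ̲‖x‖ ≤ ‖Lᵀx‖ ≤ σ̄‖x‖`, and every eigenvalue `μ` of
the symmetric matrix `H̄` satisfying `0 < λ̲ ≤ |μ| ≤ λ̄`, the modified matrix
`H̄̄ = PᵀLQΛ̄QᵀLᵀP` with `Λ̄ = diag(max{τ,|λⱼ|})` satisfies
`σ̲²·max{τ, λ̲/σ̄²}·‖x‖² ≤ xᵀH̄̄x ≤ σ̄²·max{τ, λ̄/σ̲²}·‖x‖²` for all `x`; in particular
all eigenvalues of `H̄̄` lie in `[σ̲²·max{τ, λ̲/σ̄²}, σ̄²·max{τ, λ̄/σ̲²}]`. -/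
theorem stmt_11 {p : ℕ} (hp : 1 ≤ p)
    (Pm L Q : Matrix (Fin p) (Fin p) ℝ)
    (hPm : IsPermutationMatrix Pm) (hL : IsUnit L) (hQ : Q * Qᵀ = 1)
    (lam : Fin p → ℝ)
    (σlo σhi : ℝ) (hσlo : 0 < σlo) (hσ : σlo ≤ σhi)
    (hLlow : ∀ x : Fin p → ℝ, σlo * euclNorm x ≤ euclNorm (Lᵀ *ᵥ x))
    (hLup : ∀ x : Fin p → ℝ, euclNorm (Lᵀ *ᵥ x) ≤ σhi * euclNorm x)
    (lamlo lamhi : ℝ) (hlamlo : 0 < lamlo) (hlam : lamlo ≤ lamhi)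
    (heig : ∀ μ : ℝ, ∀ v : Fin p → ℝ, v ≠ 0 →
      (Pmᵀ * L * Q * Matrix.diagonal lam * Qᵀ * Lᵀ * Pm) *ᵥ v = μ • v →
      lamlo ≤ |μ| ∧ |μ| ≤ lamhi)
    (τ : ℝ) (hτ : 0 < τ) :
    (∀ x : Fin p → ℝ,
      σlo ^ 2 * max τ (lamlo / σhi ^ 2) * euclNorm x ^ 2 ≤
          x ⬝ᵥ (Pmᵀ * L * Q * Matrix.diagonal (fun j => max τ |lam j|) * Qᵀ * Lᵀ * Pm) *ᵥ x ∧
        x ⬝ᵥ (Pmᵀ * L * Q * Matrix.diagonal (fun j => max τ |lam j|) * Qᵀ * Lᵀ * Pm) *ᵥ x ≤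
          σhi ^ 2 * max τ (lamhi / σlo ^ 2) * euclNorm x ^ 2) ∧
    (∀ μ : ℝ, ∀ v : Fin p → ℝ, v ≠ 0 →
      (Pmᵀ * L * Q * Matrix.diagonal (fun j => max τ |lam j|) * Qᵀ * Lᵀ * Pm) *ᵥ v = μ • v →
      σlo ^ 2 * max τ (lamlo / σhi ^ 2) ≤ μ ∧ μ ≤ σhi ^ 2 * max τ (lamhi / σlo ^ 2)) :=
  stmt_11_general Pm L Q hPm hQ lam σlo σhi hσlo hLlow hLup lamlo lamhi hlamlo heig τ hτ
end

section
/- Let p ≥ 1, let f : ℝ^p → ℝ be continuously differentiable with gradient g, 𝒞-strongly convex with g ℒ-Lipschitz, and let θ* satisfy g(θ*) = 0. Let a > 0 and q > 0 satisfy aℒ ≥ 1 and (q + 1)(aℒ − 1) ≤ 1. Then for every θ, e ∈ ℝ^p, the point θ⁺ := θ − a(g(θ) + e) satisfies ‖θ⁺ − θ*‖² ≤ u·‖θ − θ*‖² + v·‖e‖², where u := ℒ/𝒞 + a𝒞[(q + 1)(aℒ − 1) − 1] and v := a[aℒ(q + 1) − 1]/(q𝒞); moreover v > 0 and u ≥ 0.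 -/
/-!
The heart of the estimate is the co-coercivity of the gradient of a `C`-strongly convex function
with `L`-Lipschitz gradient, `C L ‖x - y‖² + ‖g x - g y‖² ≤ (C + L) ⟪x - y, g x - g y⟫`, which is
the co-coercivity of convex `(L - C)`-smooth functions applied to `f - C/2 ‖·‖²`. Together with
`g θ* = 0` it yields the classical contraction `‖d - a g‖ ≤ max |1 - aC| |1 - aL| ‖d‖` of the
exact gradient step. The observation error enters through the triangle inequality, and Young's
inequality with two different weights on the cross term produces exactly the coefficients `u`, `v`.
-/

open scoped RealInnerProductSpace

section GradientInequalities

variable {F : Type*} [NormedAddCommGroup F] [InnerProductSpace ℝ F]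

section QuadraticBounds

variable [CompleteSpace F] {f : F → ℝ} {g : F → F}

theorem le_add_inner_add_of_inner_gradient_le (hgrad : ∀ x, HasGradientAt f (g x) x) {K : ℝ}
    {x d : F} (hK : ∀ t ∈ Set.Ioo (0 : ℝ) 1, ⟪g (x + t • d) - g x, d⟫ ≤ K * t * ‖d‖ ^ 2) :
    f (x + d) ≤ f x + ⟪g x, d⟫ + K / 2 * ‖d‖ ^ 2 := by
  set φ : ℝ → ℝ := fun t ↦ f (x + t • d) - t * ⟪g x, d⟫ - K * t ^ 2 / 2 * ‖d‖ ^ 2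
  have hφ : ∀ t, HasDerivAt φ (⟪g (x + t • d), d⟫ - ⟪g x, d⟫ - K * t * ‖d‖ ^ 2) t := by
    intro t
    have hline : HasDerivAt (fun t : ℝ ↦ x + t • d) d t := by
      simpa using ((hasDerivAt_id t).smul_const d).const_add x
    have hquad : HasDerivAt (fun t : ℝ ↦ K * t ^ 2 / 2 * ‖d‖ ^ 2) (K * t * ‖d‖ ^ 2) t :=
      ((((hasDerivAt_pow 2 t).const_mul K).div_const 2).mul_const _).congr_deriv
        (by push_cast; ring)
    exact (((hgrad _).hasFDerivAt.comp_hasDerivAt t hline).sub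
      ((hasDerivAt_id t).mul_const _)).sub hquad |>.congr_deriv (by simp)
  have hanti : AntitoneOn φ (Set.Icc 0 1) := by
    refine antitoneOn_of_hasDerivWithinAt_nonpos (convex_Icc 0 1)
      (fun t _ ↦ (hφ t).continuousAt.continuousWithinAt) (fun t _ ↦ (hφ t).hasDerivWithinAt) ?_
    intro t ht
    rw [interior_Icc] at ht
    linarith [hK t ht, inner_sub_left (𝕜 := ℝ) (g (x + t • d)) (g x) d]
  have h01 := hanti (Set.left_mem_Icc.2 zero_le_one) (Set.right_mem_Icc.2 zero_le_one) zero_le_one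
  norm_num [φ] at h01
  linarith

theorem le_add_inner_add_of_lipschitz_gradient (hgrad : ∀ x, HasGradientAt f (g x) x) {L : ℝ}
    (hlip : ∀ x y, ‖g x - g y‖ ≤ L * ‖x - y‖) (u v : F) :
    f v ≤ f u + ⟪g u, v - u⟫ + L / 2 * ‖v - u‖ ^ 2 := by
  have key := le_add_inner_add_of_inner_gradient_le hgrad (K := L) (x := u) (d := v - u)
    fun t ht ↦ by
      have hnorm : ‖t • (v - u)‖ = t * ‖v - u‖ := by rw [norm_smul, Real.norm_of_nonneg ht.1.le]
      have hstep := hlip (u + t • (v - u)) u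
      rw [add_sub_cancel_left, hnorm] at hstep
      calc ⟪g (u + t • (v - u)) - g u, v - u⟫ ≤ ‖g (u + t • (v - u)) - g u‖ * ‖v - u‖ :=
            real_inner_le_norm _ _
        _ ≤ L * (t * ‖v - u‖) * ‖v - u‖ := by gcongr
        _ = L * t * ‖v - u‖ ^ 2 := by ring
  simpa using key

theorem add_inner_add_le_of_stronglyMonotone_gradient (hgrad : ∀ x, HasGradientAt f (g x) x)
    {C : ℝ} (hsc : ∀ x y, C * ‖x - y‖ ^ 2 ≤ ⟪x - y, g x - g y⟫) (u v : F) :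
    f u + ⟪g u, v - u⟫ + C / 2 * ‖v - u‖ ^ 2 ≤ f v := by
  have hneg (x : F) : HasGradientAt (-f) ((-g) x) x := by
    simpa using (hgrad x).hasFDerivAt.neg.hasGradientAt
  have key := le_add_inner_add_of_inner_gradient_le hneg (K := -C) (x := u) (d := v - u)
    fun t ht ↦ by
      have hstep := hsc (u + t • (v - u)) u
      rw [add_sub_cancel_left, norm_smul, real_inner_smul_left, Real.norm_of_nonneg ht.1.le]
        at hstep
      rw [Pi.neg_apply, Pi.neg_apply, neg_sub_neg, ← neg_sub, inner_neg_left, real_inner_comm]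
      nlinarith [ht.1]
  simp only [Pi.neg_apply, add_sub_cancel, inner_neg_left] at key
  linarith

end QuadraticBounds

section Cocoercivity

variable {f : F → ℝ} {g : F → F}

theorem add_inner_add_sq_div_le_of_quadratic_bounds {K : ℝ} (hK : 0 < K)
    (hlow : ∀ u v, f u + ⟪g u, v - u⟫ ≤ f v)
    (hup : ∀ u v, f v ≤ f u + ⟪g u, v - u⟫ + K / 2 * ‖v - u‖ ^ 2) (x y : F) :
    f x + ⟪g x, y - x⟫ + ‖g y - g x‖ ^ 2 / (2 * K) ≤ f y := by
  set D := g y - g x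
  have hup' := hup y (y - K⁻¹ • D)
  have hlow' := hlow x (y - K⁻¹ • D)
  rw [sub_sub_cancel_left, norm_neg, norm_smul, inner_neg_right, real_inner_smul_right,
    Real.norm_of_nonneg (inv_nonneg.2 hK.le)] at hup'
  rw [sub_right_comm, inner_sub_right, real_inner_smul_right] at hlow'
  have hD : ⟪g y, D⟫ - ⟪g x, D⟫ = ‖D‖ ^ 2 := by
    rw [← inner_sub_left, real_inner_self_eq_norm_sq]
  have hquad : K / 2 * (K⁻¹ * ‖D‖) ^ 2 = ‖D‖ ^ 2 / (2 * K) := by field_simp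
  have hlin : K⁻¹ * ⟪g y, D⟫ - K⁻¹ * ⟪g x, D⟫ = 2 * (‖D‖ ^ 2 / (2 * K)) := by
    rw [← mul_sub, hD]
    field_simp
  linarith

theorem norm_sub_sq_le_of_quadratic_bounds {K : ℝ} (hK : 0 < K)
    (hlow : ∀ u v, f u + ⟪g u, v - u⟫ ≤ f v)
    (hup : ∀ u v, f v ≤ f u + ⟪g u, v - u⟫ + K / 2 * ‖v - u‖ ^ 2) (x y : F) :
    ‖g x - g y‖ ^ 2 ≤ K * ⟪x - y, g x - g y⟫ := by
  have hxy := add_inner_add_sq_div_le_of_quadratic_bounds hK hlow hup x y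
  have hyx := add_inner_add_sq_div_le_of_quadratic_bounds hK hlow hup y x
  have hsum : ⟪g x, y - x⟫ + ⟪g y, x - y⟫ = -⟪x - y, g x - g y⟫ := by
    simp only [inner_sub_left, inner_sub_right]
    rw [real_inner_comm (g x) x, real_inner_comm (g y) x, real_inner_comm (g x) y,
      real_inner_comm (g y) y]
    ring
  rw [norm_sub_rev] at hxy
  have hdiv : ‖g x - g y‖ ^ 2 / K ≤ ⟪x - y, g x - g y⟫ := by
    have : ‖g x - g y‖ ^ 2 / K = 2 * (‖g x - g y‖ ^ 2 / (2 * K)) := by field_simp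
    linarith
  rwa [div_le_iff₀' hK] at hdiv

theorem cocoercive_of_stronglyMonotone_of_lipschitz [CompleteSpace F]
    (hgrad : ∀ x, HasGradientAt f (g x) x) {C L : ℝ} (hC : 0 ≤ C) (hCL : C ≤ L)
    (hsc : ∀ x y, C * ‖x - y‖ ^ 2 ≤ ⟪x - y, g x - g y⟫)
    (hlip : ∀ x y, ‖g x - g y‖ ≤ L * ‖x - y‖) (x y : F) :
    C * L * ‖x - y‖ ^ 2 + ‖g x - g y‖ ^ 2 ≤ (C + L) * ⟪x - y, g x - g y⟫ := by
  rcases hCL.lt_or_eq with hlt | rfl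
  · set h : F → ℝ := fun v ↦ f v - C / 2 * ‖v‖ ^ 2
    set gh : F → F := fun v ↦ g v - C • v
    have hshift (u v : F) : h v - h u - ⟪gh u, v - u⟫ =
        f v - f u - ⟪g u, v - u⟫ - C / 2 * ‖v - u‖ ^ 2 := by
      simp only [h, gh, inner_sub_left, real_inner_smul_left, norm_sub_sq_real, inner_sub_right,
        real_inner_self_eq_norm_sq, real_inner_comm u v]
      ring
    have hco := norm_sub_sq_le_of_quadratic_bounds (f := h) (g := gh) (sub_pos.2 hlt)
      (fun u v ↦ by
        linarith [hshift u v, add_inner_add_le_of_stronglyMonotone_gradient hgrad hsc u v])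
      (fun u v ↦ by
        linarith [hshift u v, le_add_inner_add_of_lipschitz_gradient hgrad hlip u v]) x y
    have hgh : gh x - gh y = (g x - g y) - C • (x - y) := by simp only [gh, smul_sub]; abel
    rw [hgh, norm_sub_sq_real, norm_smul, inner_sub_right, real_inner_smul_right,
      real_inner_smul_right, real_inner_self_eq_norm_sq, mul_pow, Real.norm_eq_abs, sq_abs,
      real_inner_comm (x - y)] at hco
    linarith
  · have hmono := hsc x y
    have hcs : ⟪x - y, g x - g y⟫ ≤ ‖x - y‖ * ‖g x - g y‖ := real_inner_le_norm _ _
    have hlip' := hlip x y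
    nlinarith [norm_nonneg (x - y), norm_nonneg (g x - g y), mul_le_mul_of_nonneg_left hmono hC]

end Cocoercivity

theorem le_of_inner_le_of_norm_le {C L : ℝ} {d G : F} (hd : d ≠ 0)
    (hsc : C * ‖d‖ ^ 2 ≤ ⟪d, G⟫) (hlip : ‖G‖ ≤ L * ‖d‖) : C ≤ L := by
  have hpos : 0 < ‖d‖ := norm_pos_iff.2 hd
  have : C * ‖d‖ ^ 2 ≤ L * ‖d‖ ^ 2 :=
    calc C * ‖d‖ ^ 2 ≤ ‖d‖ * ‖G‖ := hsc.trans (real_inner_le_norm d G)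
      _ ≤ ‖d‖ * (L * ‖d‖) := by gcongr
      _ = L * ‖d‖ ^ 2 := by ring
  exact le_of_mul_le_mul_right this (by positivity)

theorem norm_sub_smul_le_of_cocoercive {C L a : ℝ} (hC : 0 < C) (hCL : C ≤ L) (ha : 0 ≤ a)
    {d G : F} (hco : C * L * ‖d‖ ^ 2 + ‖G‖ ^ 2 ≤ (C + L) * ⟪d, G⟫) :
    ‖d - a • G‖ ≤ max |1 - a * C| |1 - a * L| * ‖d‖ := by
  have hS : ⟪d, G⟫ ≤ ‖d‖ * ‖G‖ := real_inner_le_norm d G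
  have hsq : ‖d - a • G‖ ^ 2 = ‖d‖ ^ 2 - 2 * a * ⟪d, G⟫ + a ^ 2 * ‖G‖ ^ 2 := by
    rw [norm_sub_sq_real, real_inner_smul_right, norm_smul, Real.norm_of_nonneg ha]
    ring
  have hbracket : 0 ≤ (‖G‖ - C * ‖d‖) * (L * ‖d‖ - ‖G‖) := by nlinarith
  have hCd : C * ‖d‖ ≤ L * ‖d‖ := by gcongr
  have hlow : C * ‖d‖ ≤ ‖G‖ := by
    by_contra! h
    linarith [mul_neg_of_neg_of_pos (sub_neg.2 h) (by linarith : 0 < L * ‖d‖ - ‖G‖)]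
  have hup : ‖G‖ ≤ L * ‖d‖ := by
    by_contra! h
    linarith [mul_neg_of_pos_of_neg (by linarith : 0 < ‖G‖ - C * ‖d‖) (sub_neg.2 h)]
  -- After multiplying by `C + L`, the sign of `a (C + L) - 2` decides which bound on `‖G‖` applies.
  have hcase : ‖d - a • G‖ ^ 2 ≤ (1 - a * C) ^ 2 * ‖d‖ ^ 2 ∨
      ‖d - a • G‖ ^ 2 ≤ (1 - a * L) ^ 2 * ‖d‖ ^ 2 := by
    have hCL' : 0 < C + L := by linarith
    rw [hsq]
    rcases le_total (a * (C + L)) 2 with h | h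
    · refine .inl (le_of_mul_le_mul_left ?_ hCL')
      nlinarith [mul_le_mul_of_nonneg_left hco (by positivity : (0 : ℝ) ≤ 2 * a),
        mul_le_mul_of_nonneg_left (mul_self_le_mul_self (by positivity) hlow)
          (by nlinarith : 0 ≤ a * (2 - a * (C + L)))]
    · refine .inr (le_of_mul_le_mul_left ?_ hCL')
      nlinarith [mul_le_mul_of_nonneg_left hco (by positivity : (0 : ℝ) ≤ 2 * a),
        mul_le_mul_of_nonneg_left (mul_self_le_mul_self (norm_nonneg G) hup)
          (by nlinarith : 0 ≤ a * (a * (C + L) - 2))]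
  refine le_of_sq_le_sq ?_ (by positivity)
  rw [mul_pow]
  rcases hcase with h | h <;> refine h.trans (mul_le_mul_of_nonneg_right ?_ (by positivity))
  · simpa only [sq_abs] using
      pow_le_pow_left₀ (abs_nonneg (1 - a * C)) (le_max_left _ |1 - a * L|) 2
  · simpa only [sq_abs] using
      pow_le_pow_left₀ (abs_nonneg (1 - a * L)) (le_max_right |1 - a * C| _) 2

theorem max_abs_one_sub_mul_bounds {C L a : ℝ} (hC : 0 < C) (hCL : C ≤ L) (ha : 0 < a)
    (haL : 1 ≤ a * L) (haL₂ : a * L ≤ 2) :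
    max |1 - a * C| |1 - a * L| ^ 2 ≤ 1 - 2 * a * C + a ^ 2 * L * C ∧
      C * max |1 - a * C| |1 - a * L| ≤ L - C + C * (a * L - 1) := by
  have hL : 0 < L := hC.trans_le hCL
  rcases max_choice |1 - a * C| |1 - a * L| with h | h <;> rw [h]
  · refine ⟨?_, ?_⟩
    · rw [sq_abs]
      nlinarith [mul_le_mul_of_nonneg_left hCL (by positivity : 0 ≤ a ^ 2 * C)]
    · rcases le_total (a * C) 1 with haC | haC
      · rw [abs_of_nonneg (by linarith)]
        -- `L + a C² ≥ L + C²/L ≥ 2C` by `a L ≥ 1` and AM-GM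
        have hAMGM : 0 ≤ L * (L + a * C ^ 2 - 2 * C) := by
          nlinarith [mul_le_mul_of_nonneg_right haL (sq_nonneg C), sq_nonneg (L - C)]
        nlinarith [nonneg_of_mul_nonneg_right hAMGM hL]
      · rw [abs_of_nonpos (by linarith)]
        nlinarith [mul_le_mul_of_nonneg_left hCL (by positivity : 0 ≤ a * C)]
  · rw [abs_of_nonpos (by linarith)]
    refine ⟨?_, by nlinarith⟩
    nlinarith [mul_nonneg (mul_nonneg ha.le (sub_nonneg.2 hCL)) (sub_nonneg.2 haL₂)]

theorem sq_add_le_of_contraction {C L a q κ X E : ℝ} (hC : 0 < C) (hCL : C ≤ L) (ha : 0 < a)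
    (hq : 0 < q) (haL : 1 ≤ a * L) (hκ : κ ^ 2 ≤ 1 - 2 * a * C + a ^ 2 * L * C)
    (hCκ : C * κ ≤ L - C + C * (a * L - 1)) (hX : 0 ≤ X) (hE : 0 ≤ E) :
    (κ * X + a * E) ^ 2 ≤ (L / C + a * C * ((q + 1) * (a * L - 1) - 1)) * X ^ 2 +
      a * (a * L * (q + 1) - 1) / (q * C) * E ^ 2 := by
  have hqC : 0 < q * C := by positivity
  have hsq : q * C * (κ ^ 2 * X ^ 2) ≤ q * C * ((1 - 2 * a * C + a ^ 2 * L * C) * X ^ 2) := by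
    gcongr
  have hcross : 2 * a * q * E * (C * κ * X) ≤
      2 * a * q * E * ((L - C + C * (a * L - 1)) * X) := by
    gcongr
  -- Young's inequality splits the two parts of the cross term with different weights.
  have hyoung₁ : 0 ≤ q * (L - C) * (X - a * E) ^ 2 := by
    have := sub_nonneg.2 hCL
    positivity
  have hyoung₂ : 0 ≤ a * (a * L - 1) * (q * C * X - E) ^ 2 := by
    have := sub_nonneg.2 haL
    positivity
  rw [← mul_le_mul_iff_right₀ hqC]
  have hrhs : q * C * ((L / C + a * C * ((q + 1) * (a * L - 1) - 1)) * X ^ 2 +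
      a * (a * L * (q + 1) - 1) / (q * C) * E ^ 2) =
      q * L * X ^ 2 + q * C ^ 2 * a * ((q + 1) * (a * L - 1) - 1) * X ^ 2 +
        a * (a * L * (q + 1) - 1) * E ^ 2 := by
    field_simp
  rw [hrhs]
  linarith

end GradientInequalities

theorem stmt_18_general {p : ℕ} (hp : 1 ≤ p)
    (f : EuclideanSpace ℝ (Fin p) → ℝ)
    (g : EuclideanSpace ℝ (Fin p) → EuclideanSpace ℝ (Fin p))
    (C L : ℝ) (hC : 0 < C)
    (hgrad : ∀ x, HasGradientAt f (g x) x)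
    (hsc : ∀ x y : EuclideanSpace ℝ (Fin p),
      C * ‖x - y‖ ^ 2 ≤ (inner ℝ (x - y) (g x - g y) : ℝ))
    (hlip : ∀ x y : EuclideanSpace ℝ (Fin p), ‖g x - g y‖ ≤ L * ‖x - y‖)
    (θstar : EuclideanSpace ℝ (Fin p)) (hroot : g θstar = 0)
    (a q : ℝ) (ha : 0 < a) (hq : 0 < q)
    (haL : 1 ≤ a * L) (haLq : (q + 1) * (a * L - 1) ≤ 1) :
    (∀ θ e : EuclideanSpace ℝ (Fin p),
      ‖θ - a • (g θ + e) - θstar‖ ^ 2 ≤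
        (L / C + a * C * ((q + 1) * (a * L - 1) - 1)) * ‖θ - θstar‖ ^ 2 +
          a * (a * L * (q + 1) - 1) / (q * C) * ‖e‖ ^ 2) ∧
    0 < a * (a * L * (q + 1) - 1) / (q * C) ∧
    0 ≤ L / C + a * C * ((q + 1) * (a * L - 1) - 1) := by
  have hCL : C ≤ L := by
    have : NeZero p := ⟨by omega⟩
    obtain ⟨v, hv⟩ := exists_ne (0 : EuclideanSpace ℝ (Fin p))
    simpa using le_of_inner_le_of_norm_le (sub_ne_zero.2 hv) (hsc v 0) (hlip v 0)
  have haL₂ : a * L ≤ 2 := by nlinarith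
  obtain ⟨hκ, hCκ⟩ := max_abs_one_sub_mul_bounds hC hCL ha haL haL₂
  refine ⟨fun θ e ↦ ?_, ?_, ?_⟩
  · have hco := cocoercive_of_stronglyMonotone_of_lipschitz hgrad hC.le hCL hsc hlip θ θstar
    rw [hroot, sub_zero] at hco
    have hstep := norm_sub_smul_le_of_cocoercive hC hCL ha.le hco
    have hsplit : ‖θ - a • (g θ + e) - θstar‖ ≤ ‖θ - θstar - a • g θ‖ + a * ‖e‖ :=
      calc ‖θ - a • (g θ + e) - θstar‖ = ‖(θ - θstar - a • g θ) - a • e‖ := by congr 1; module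
        _ ≤ ‖θ - θstar - a • g θ‖ + ‖a • e‖ := norm_sub_le _ _
        _ = ‖θ - θstar - a • g θ‖ + a * ‖e‖ := by rw [norm_smul, Real.norm_of_nonneg ha.le]
    calc ‖θ - a • (g θ + e) - θstar‖ ^ 2
        ≤ (max |1 - a * C| |1 - a * L| * ‖θ - θstar‖ + a * ‖e‖) ^ 2 := by gcongr; linarith
      _ ≤ _ := sq_add_le_of_contraction hC hCL ha hq haL hκ hCκ (norm_nonneg _) (norm_nonneg _)
  · have : 0 < a * L * (q + 1) - 1 := by nlinarith
    positivity
  · have : 1 ≤ L / C := (one_le_div hC).2 hCL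
    nlinarith [mul_nonneg (mul_nonneg (mul_nonneg ha.le hC.le) hq.le) (sub_nonneg.2 haL)]

/-- One-step error propagation: for a `𝒞`-strongly convex loss with `ℒ`-Lipschitz
gradient `g` and root `θ*`, a gain `a > 0` and slack `q > 0` with `aℒ ≥ 1` and
`(q+1)(aℒ−1) ≤ 1`, the update `θ⁺ = θ − a(g θ + e)` satisfies
`‖θ⁺ − θ*‖² ≤ u‖θ − θ*‖² + v‖e‖²` where
`u = ℒ/𝒞 + a𝒞[(q+1)(aℒ−1)−1]` and `v = a[aℒ(q+1)−1]/(q𝒞)`; moreover `v > 0`, `u ≥ 0`. -/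
theorem stmt_18 {p : ℕ} (hp : 1 ≤ p)
    (f : EuclideanSpace ℝ (Fin p) → ℝ)
    (g : EuclideanSpace ℝ (Fin p) → EuclideanSpace ℝ (Fin p))
    (C L : ℝ) (hC : 0 < C)
    (hsmooth : ContDiff ℝ 1 f)
    (hgrad : ∀ x, HasGradientAt f (g x) x)
    (hsc : ∀ x y : EuclideanSpace ℝ (Fin p),
      C * ‖x - y‖ ^ 2 ≤ (inner ℝ (x - y) (g x - g y) : ℝ))
    (hlip : ∀ x y : EuclideanSpace ℝ (Fin p), ‖g x - g y‖ ≤ L * ‖x - y‖)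
    (θstar : EuclideanSpace ℝ (Fin p)) (hroot : g θstar = 0)
    (a q : ℝ) (ha : 0 < a) (hq : 0 < q)
    (haL : 1 ≤ a * L) (haLq : (q + 1) * (a * L - 1) ≤ 1) :
    (∀ θ e : EuclideanSpace ℝ (Fin p),
      ‖θ - a • (g θ + e) - θstar‖ ^ 2 ≤
        (L / C + a * C * ((q + 1) * (a * L - 1) - 1)) * ‖θ - θstar‖ ^ 2 +
          a * (a * L * (q + 1) - 1) / (q * C) * ‖e‖ ^ 2) ∧
    0 < a * (a * L * (q + 1) - 1) / (q * C) ∧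
    0 ≤ L / C + a * C * ((q + 1) * (a * L - 1) - 1) :=
  stmt_18_general hp f g C L hC hgrad hsc hlip θstar hroot a q ha hq haL haLq
end
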